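/- arXiv:2205.12327 — 6 statements merged into one kernel-verified Lean document; each statement's English description precedes it below -/
import Mathlib

section
/- Let (Ŷ, Y, A) be {0,1}-valued random variables on a probability space such that for some fixed constant c ∈ (0, 1/2), for all a, y, ŷ ∈ {0,1} one has Pr[Y = y | A = a] ∈ (c, 1-c) and Pr[Ŷ = ŷ | A = a] ∈ (c, 1-c). Then there exists a constant C > 0 (depending only on c) such that: for all sufficiently small ε > 0 with ε < c and all δ with 0 < δ and δ ≤ ε², if (Ŷ, Y, A) satisfies both (ε, δ)-sufficiency and exact separation, then at least one of the following holds: (1) for each a ∈ {0,1} and each μ ∈ {PPV, NPV, TPR, TNR}, μ_a ≥ 1 − C(ε + δ/ε); (2) for each a ∈ {0,1} and each μ ∈ {PPV, NPV, TPR, TNR}, μ_a ≤ C(ε + δ/ε); (3) the set {ρ₀, ρ₁} is (C(ε + δ/ε), 0)-approximately equal, where ρ_a = Pr[Y = 1 | A = a]/Pr[Y = 0 | A = a]. -/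
open MeasureTheory

/-- Conditional probability `Pr[s | t]` as a real number. -/
noncomputable def condProb {Ω : Type*} [MeasurableSpace Ω] (μ : Measure Ω) (s t : Set Ω) : ℝ :=
  (μ (s ∩ t)).toReal / (μ t).toReal

/-- A pair of values `{x, y}` is `(ε, δ)`-approximately equal:
each is at most `e^ε` times the other, plus `δ`. -/
def approxEqPair (x y ε δ : ℝ) : Prop :=
  x ≤ y * Real.exp ε + δ ∧ y ≤ x * Real.exp ε + δ

set_option maxHeartbeats 1000000

open Real


private lemma aux_prod (E d x0 y1 x1 y0 : ℝ) (hE1 : 1 ≤ E) (hE2 : E ≤ 2)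
    (hd : 0 < d) (hd1 : d ≤ 1)
    (hx1n : 0 ≤ x1) (hy0n : 0 ≤ y0) (hx1u : x1 ≤ 1) (hy0u : y0 ≤ 1)
    (hx0n : 0 ≤ x0) (hy1n : 0 ≤ y1)
    (h1 : x0 ≤ x1*E + d) (h2 : y1 ≤ y0*E + d) :
    x0*y1 ≤ x1*y0*(E*E) + 5*d := by
  have h3 : x0*y1 ≤ (x1*E + d) * (y0*E + d) :=
    mul_le_mul h1 h2 hy1n (by positivity)
  have hE0 : (0:ℝ) ≤ E := le_trans zero_le_one hE1
  have b1 : x1*E ≤ 2 := by nlinarith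
  have b2 : y0*E ≤ 2 := by nlinarith
  have c1 : d*(x1*E) ≤ d*2 := mul_le_mul_of_nonneg_left b1 hd.le
  have c2 : d*(y0*E) ≤ d*2 := mul_le_mul_of_nonneg_left b2 hd.le
  have c3 : d*d ≤ d := by nlinarith
  nlinarith [h3, c1, c2, c3]

private lemma aux_small1 (C ε d E2 eC ρ0 ρ1 M X : ℝ) (hM : 0 ≤ M) (hρ1 : 0 < ρ1)
    (hid : X*ρ1 = M*ρ0) (hsuf : X ≤ M*E2 + 5*d) (hbig : ρ1*eC ≤ ρ0)
    (hgap : E2 + C*(d/ε) ≤ eC) (hε : 0 < ε) (hd : 0 < d) (hC : 0 < C) :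
    M ≤ 5*ε/C := by
  have hA : M*eC*ρ1 ≤ (M*E2+5*d)*ρ1 := by
    have k1 : M*(ρ1*eC) ≤ M*ρ0 := mul_le_mul_of_nonneg_left hbig hM
    have k2 : X*ρ1 ≤ (M*E2+5*d)*ρ1 := mul_le_mul_of_nonneg_right hsuf hρ1.le
    nlinarith
  have hB : M*eC ≤ M*E2+5*d := le_of_mul_le_mul_right hA hρ1
  have e1 : M*(C*(d/ε)) ≤ 5*d := by
    have k3 : M*(E2 + C*(d/ε)) ≤ M*eC := mul_le_mul_of_nonneg_left hgap hM
    nlinarith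
  have e2 : M*(C*(d/ε))*ε = M*(C*d) := by field_simp
  have e3 : M*(C*d) ≤ 5*d*ε := by
    rw [← e2]
    have := mul_le_mul_of_nonneg_right e1 hε.le
    nlinarith
  have e4 : M*C ≤ 5*ε := by nlinarith
  rw [le_div_iff₀ hC]; linarith

private lemma aux_small2 (C c ε ρ0 ρ1 M X : ℝ) (hc : 0 < c) (hC : C = 7/c^2)
    (hε : 0 < ε) (hM0 : 0 ≤ M) (hX : 0 ≤ X) (hid : X*ρ1 = M*ρ0) (hMb : M ≤ 5*ε/C)
    (hρ1 : c ≤ ρ1) (hρ0u : ρ0 ≤ 1/c) (hρ00 : 0 ≤ ρ0) : X ≤ ε := by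
  have hC0 : (0:ℝ) < C := by rw [hC]; positivity
  have h1 : X*ρ1 ≤ (5*ε/C)*(1/c) :=
    calc X*ρ1 = M*ρ0 := hid
      _ ≤ (5*ε/C)*ρ0 := mul_le_mul_of_nonneg_right hMb hρ00
      _ ≤ (5*ε/C)*(1/c) := mul_le_mul_of_nonneg_left hρ0u (by positivity)
  have h2 : (5*ε/C)*(1/c) = (5/7)*ε*c := by rw [hC]; field_simp
  nlinarith [mul_le_mul_of_nonneg_left hρ1 hX, mul_pos hε hc]

private lemma aux_dich (ε x0 x1 y0 y1 : ℝ) (hε : 0 < ε) (hε4 : ε ≤ 1/4)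
    (hx0 : 0 ≤ x0) (hx1 : 0 ≤ x1) (hy0 : 0 ≤ y0) (hy1 : 0 ≤ y1)
    (hs0 : x0 + y0 = 1) (hs1 : x1 + y1 = 1)
    (hp1 : x1*y0 ≤ ε) (hp2 : x0*y1 ≤ ε) :
    (x0 ≤ 2*ε ∧ x1 ≤ 2*ε) ∨ (y0 ≤ 2*ε ∧ y1 ≤ 2*ε) := by
  rcases le_or_gt x0 (1/2) with h | h
  · left
    have h1 : x1 ≤ 2*ε := by nlinarith
    have h2 : 1/2 ≤ y1 := by linarith
    constructor
    · nlinarith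
    · exact h1
  · right
    have h1 : y1 ≤ 2*ε := by nlinarith
    have h2 : 1/2 ≤ x1 := by linarith
    constructor
    · nlinarith
    · exact h1

private lemma aux_num (c ε N D : ℝ) (hc : 0 < c) (hε : 0 < ε) (hD : c ≤ D)
    (hDu : D ≤ 2/c) (hN : 0 ≤ N) (h : N/D ≤ 2*ε) : N*c ≤ 4*ε := by
  have hD0 : 0 < D := lt_of_lt_of_le hc hD
  rw [div_le_iff₀ hD0] at h
  have h2 : 2*ε*D ≤ 2*ε*(2/c) := mul_le_mul_of_nonneg_left hDu (by positivity)
  have h4 : N ≤ 2*ε*(2/c) := le_trans h h2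
  have h5 : N*c ≤ (2*ε*(2/c))*c := mul_le_mul_of_nonneg_right h4 hc.le
  have h6 : (2*ε*(2/c))*c = 4*ε := by field_simp; ring
  linarith

private lemma aux_div3 (c ε a ρ : ℝ) (hc : 0 < c) (ha : 0 ≤ a) (hρ : c ≤ ρ)
    (h : (a*ρ)*c ≤ 4*ε) : a ≤ 4*ε/c^2 := by
  rw [le_div_iff₀ (by positivity : (0:ℝ) < c^2)]
  have h1 : (a*c)*c ≤ (a*ρ)*c :=
    mul_le_mul_of_nonneg_right (mul_le_mul_of_nonneg_left hρ ha) hc.le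
  calc a*c^2 = (a*c)*c := by ring
    _ ≤ 4*ε := le_trans h1 h

private lemma aux_div2 (c ε a : ℝ) (hc : 0 < c) (hc1 : c < 1) (ha : 0 ≤ a)
    (h : a*c ≤ 4*ε) : a ≤ 4*ε/c^2 := by
  rw [le_div_iff₀ (by positivity : (0:ℝ) < c^2)]
  have h1 : (a*c)*c ≤ (a*c)*1 := mul_le_mul_of_nonneg_left hc1.le (mul_nonneg ha hc.le)
  calc a*c^2 = (a*c)*c := by ring
    _ ≤ (a*c)*1 := h1
    _ = a*c := by ring
    _ ≤ 4*ε := h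

lemma fair_core (c ε δ t f ρ0 ρ1 : ℝ)
    (hc0 : 0 < c) (hc2 : c < 1/2)
    (hε : 0 < ε) (hεs : ε < c^2/9)
    (hδ : 0 < δ) (hδε : δ ≤ ε^2)
    (ht0 : 0 ≤ t) (ht1 : t ≤ 1) (hf0 : 0 ≤ f) (hf1 : f ≤ 1)
    (hρ0l : c ≤ ρ0) (hρ0u : ρ0 ≤ 1/c) (hρ1l : c ≤ ρ1) (hρ1u : ρ1 ≤ 1/c)
    (hd10 : c ≤ t*ρ0 + f) (hd11 : c ≤ t*ρ1 + f)
    (hd00 : c ≤ (1-t)*ρ0 + (1-f)) (hd01 : c ≤ (1-t)*ρ1 + (1-f))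
    (hP01 : t*ρ0/(t*ρ0+f) ≤ (t*ρ1/(t*ρ1+f)) * exp ε + δ)
    (hP10 : t*ρ1/(t*ρ1+f) ≤ (t*ρ0/(t*ρ0+f)) * exp ε + δ)
    (hQ01 : f/(t*ρ0+f) ≤ (f/(t*ρ1+f)) * exp ε + δ)
    (hQ10 : f/(t*ρ1+f) ≤ (f/(t*ρ0+f)) * exp ε + δ)
    (hN01 : (1-f)/((1-t)*ρ0+(1-f)) ≤ ((1-f)/((1-t)*ρ1+(1-f))) * exp ε + δ)
    (hN10 : (1-f)/((1-t)*ρ1+(1-f)) ≤ ((1-f)/((1-t)*ρ0+(1-f))) * exp ε + δ)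
    (hM01 : (1-t)*ρ0/((1-t)*ρ0+(1-f)) ≤ ((1-t)*ρ1/((1-t)*ρ1+(1-f))) * exp ε + δ)
    (hM10 : (1-t)*ρ1/((1-t)*ρ1+(1-f)) ≤ ((1-t)*ρ0/((1-t)*ρ0+(1-f))) * exp ε + δ)
    (hbig : ρ1 * exp ((7/c^2) * (ε + δ/ε)) ≤ ρ0) :
    (1 - 7/c^2*(ε + δ/ε) ≤ t ∧ f ≤ 7/c^2*(ε + δ/ε) ∧
      1 - 7/c^2*(ε + δ/ε) ≤ t*ρ0/(t*ρ0+f) ∧ 1 - 7/c^2*(ε + δ/ε) ≤ t*ρ1/(t*ρ1+f) ∧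
      1 - 7/c^2*(ε + δ/ε) ≤ (1-f)/((1-t)*ρ0+(1-f)) ∧
      1 - 7/c^2*(ε + δ/ε) ≤ (1-f)/((1-t)*ρ1+(1-f))) ∨
    (t ≤ 7/c^2*(ε + δ/ε) ∧ 1 - f ≤ 7/c^2*(ε + δ/ε) ∧
      t*ρ0/(t*ρ0+f) ≤ 7/c^2*(ε + δ/ε) ∧ t*ρ1/(t*ρ1+f) ≤ 7/c^2*(ε + δ/ε) ∧
      (1-f)/((1-t)*ρ0+(1-f)) ≤ 7/c^2*(ε + δ/ε) ∧
      (1-f)/((1-t)*ρ1+(1-f)) ≤ 7/c^2*(ε + δ/ε)) := by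
  have hc1 : c < 1 := by linarith
  have hcsq : (0:ℝ) < c^2 := by positivity
  have hcc1 : c^2 < 1 := by nlinarith
  have hδε' : δ/ε ≤ ε := by rw [div_le_iff₀ hε]; nlinarith
  have hδε0 : 0 < δ/ε := div_pos hδ hε
  set η := ε + δ/ε with hηdef
  set C := (7:ℝ)/c^2 with hCdef
  clear_value η C
  have hη0 : 0 < η := by rw [hηdef]; positivity
  have hηl : ε ≤ η := by rw [hηdef]; exact le_add_of_nonneg_right hδε0.le
  have hηu : η ≤ 2*ε := by simp only [hηdef]; linarith
  have hC0 : (0:ℝ) < C := by rw [hCdef]; positivity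
  have hC28 : 28 ≤ C := by
    have h4 : c^2 ≤ 1/4 := by nlinarith
    rw [hCdef, le_div_iff₀ hcsq]; nlinarith
  have hε4 : ε ≤ 1/4 := by nlinarith
  have hδ1 : δ ≤ 1 := by nlinarith
  have hE1 : 1 ≤ exp ε := one_le_exp hε.le
  have hE2 : exp ε ≤ 2 := by
    have h12 : exp ε ≤ exp (1/2) := exp_le_exp.2 (by linarith)
    have hsq : exp (1/2) * exp (1/2) = exp 1 := by rw [← exp_add]; norm_num
    have he1 : exp 1 < 2.7182818286 := exp_one_lt_d9
    nlinarith [exp_pos (1/2)]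
  have hD0 : 0 < t*ρ0 + f := lt_of_lt_of_le hc0 hd10
  have hD1 : 0 < t*ρ1 + f := lt_of_lt_of_le hc0 hd11
  have hD0' : 0 < (1-t)*ρ0 + (1-f) := lt_of_lt_of_le hc0 hd00
  have hD1' : 0 < (1-t)*ρ1 + (1-f) := lt_of_lt_of_le hc0 hd01
  set x0 := t*ρ0/(t*ρ0+f) with hx0
  set x1 := t*ρ1/(t*ρ1+f) with hx1
  set y0 := f/(t*ρ0+f) with hy0
  set y1 := f/(t*ρ1+f) with hy1
  set n0 := (1-f)/((1-t)*ρ0+(1-f)) with hn0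
  set n1 := (1-f)/((1-t)*ρ1+(1-f)) with hn1
  set m0 := (1-t)*ρ0/((1-t)*ρ0+(1-f)) with hm0
  set m1 := (1-t)*ρ1/((1-t)*ρ1+(1-f)) with hm1
  clear_value x0 x1 y0 y1 n0 n1 m0 m1
  have hρ00 : 0 < ρ0 := lt_of_lt_of_le hc0 hρ0l
  have hρ10 : 0 < ρ1 := lt_of_lt_of_le hc0 hρ1l
  have hxy0 : x0 + y0 = 1 := by rw [hx0, hy0]; field_simp
  have hxy1 : x1 + y1 = 1 := by rw [hx1, hy1]; field_simp
  have hnm0 : n0 + m0 = 1 := by rw [hn0, hm0]; field_simp; ring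
  have hnm1 : n1 + m1 = 1 := by rw [hn1, hm1]; field_simp; ring
  have hx0n : 0 ≤ x0 := by
    rw [hx0]; exact div_nonneg (mul_nonneg ht0 hρ00.le) hD0.le
  have hx1n : 0 ≤ x1 := by
    rw [hx1]; exact div_nonneg (mul_nonneg ht0 hρ10.le) hD1.le
  have hy0n : 0 ≤ y0 := by rw [hy0]; exact div_nonneg hf0 hD0.le
  have hy1n : 0 ≤ y1 := by rw [hy1]; exact div_nonneg hf0 hD1.le
  have hn0n : 0 ≤ n0 := by
    rw [hn0]; exact div_nonneg (sub_nonneg.2 hf1) hD0'.le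
  have hn1n : 0 ≤ n1 := by
    rw [hn1]; exact div_nonneg (sub_nonneg.2 hf1) hD1'.le
  have hm0n : 0 ≤ m0 := by
    rw [hm0]; exact div_nonneg (mul_nonneg (sub_nonneg.2 ht1) hρ00.le) hD0'.le
  have hm1n : 0 ≤ m1 := by
    rw [hm1]; exact div_nonneg (mul_nonneg (sub_nonneg.2 ht1) hρ10.le) hD1'.le
  -- exact odds identities
  have idP : x0 * y1 * ρ1 = x1 * y0 * ρ0 := by
    rw [hx0, hx1, hy0, hy1]; field_simp
  have idN : n1 * m0 * ρ1 = n0 * m1 * ρ0 := by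
    rw [hn0, hn1, hm0, hm1]; field_simp
  -- sufficiency product bounds
  have prodP : x0 * y1 ≤ x1 * y0 * (exp ε * exp ε) + 5*δ :=
    aux_prod (exp ε) δ x0 y1 x1 y0 hE1 hE2 hδ hδ1 hx1n hy0n (by linarith)
      (by linarith) hx0n hy1n hP01 hQ10
  have prodN : n1 * m0 ≤ n0 * m1 * (exp ε * exp ε) + 5*δ :=
    aux_prod (exp ε) δ n1 m0 n0 m1 hE1 hE2 hδ hδ1 hn0n hm1n (by linarith)
      (by linarith) hn1n hm0n hN10 hM01
  -- exp gap
  have hegap : exp ε * exp ε + C * (δ/ε) ≤ exp (C*η) := by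
    have h1 : exp (C*η) = exp (2*ε) * Real.exp (C*η - 2*ε) := by
      rw [← exp_add]; ring_nf
    have h2 : C*η - 2*ε + 1 ≤ Real.exp (C*η - 2*ε) := add_one_le_exp _
    have h3 : (1:ℝ) ≤ exp (2*ε) := one_le_exp (by linarith)
    have h4 : exp ε * exp ε = exp (2*ε) := by rw [← exp_add]; ring_nf
    have hCηe : C*η = C*ε + C*(δ/ε) := by rw [hηdef]; ring
    have h5 : C*(δ/ε) + 2*ε ≤ C*η := by
      have h6 : 28*ε ≤ C*ε := mul_le_mul_of_nonneg_right hC28 hε.le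
      linarith
    have h6b : (0:ℝ) ≤ C*(δ/ε) := by rw [hCdef]; positivity
    have h7 : (0:ℝ) ≤ C*η - 2*ε := by linarith
    have h8 := mul_le_mul_of_nonneg_right h3 h7
    have h9 := mul_le_mul_of_nonneg_left h2 (exp_pos (2*ε)).le
    calc exp ε * exp ε + C * (δ/ε) ≤ exp (2*ε) + (C*η - 2*ε) := by linarith
      _ ≤ exp (2*ε) + exp (2*ε) * (C*η - 2*ε) := by linarith [h8]
      _ ≤ exp (C*η) := by linarith [h9, h1]
  -- smallness of the four products
  have keyP : x1 * y0 ≤ 5*ε/C :=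
    aux_small1 C ε δ (exp ε * exp ε) (exp (C*η)) ρ0 ρ1 (x1*y0) (x0*y1)
      (mul_nonneg hx1n hy0n) hρ10 idP prodP hbig hegap hε hδ hC0
  have keyN : n0 * m1 ≤ 5*ε/C :=
    aux_small1 C ε δ (exp ε * exp ε) (exp (C*η)) ρ0 ρ1 (n0*m1) (n1*m0)
      (mul_nonneg hn0n hm1n) hρ10 idN prodN hbig hegap hε hδ hC0
  have h5C : 5*ε/C ≤ ε := by
    rw [div_le_iff₀ hC0]
    have h := mul_le_mul_of_nonneg_left hC28 hε.le
    linarith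
  have keyP1 : x1 * y0 ≤ ε := keyP.trans h5C
  have keyN1 : n0 * m1 ≤ ε := keyN.trans h5C
  have keyP2 : x0 * y1 ≤ ε :=
    aux_small2 C c ε ρ0 ρ1 (x1*y0) (x0*y1) hc0 hCdef hε (mul_nonneg hx1n hy0n)
      (mul_nonneg hx0n hy1n) idP keyP hρ1l hρ0u hρ00.le
  have keyN2 : n1 * m0 ≤ ε :=
    aux_small2 C c ε ρ0 ρ1 (n0*m1) (n1*m0) hc0 hCdef hε (mul_nonneg hn0n hm1n)
      (mul_nonneg hn1n hm0n) idN keyN hρ1l hρ0u hρ00.le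
  -- dichotomies
  have dichP := aux_dich ε x0 x1 y0 y1 hε hε4 hx0n hx1n hy0n hy1n hxy0 hxy1 keyP1 keyP2
  have dichN := aux_dich ε n1 n0 m1 m0 hε hε4 hn1n hn0n hm1n hm0n hnm1 hnm0 keyN1 keyN2
  -- denominator upper bounds
  have h1c : (1:ℝ) ≤ 1/c := by rw [le_div_iff₀ hc0]; linarith
  have hDub0 : t*ρ0 + f ≤ 2/c := by
    have h1 : t*ρ0 ≤ 1*(1/c) := mul_le_mul ht1 hρ0u hρ00.le zero_le_one
    have h2 : (1:ℝ)*(1/c) = 1/c := by ring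
    have h3 : 1/c + 1/c = 2/c := by ring
    linarith
  have hDub0' : (1-t)*ρ0 + (1-f) ≤ 2/c := by
    have h1 : (1-t)*ρ0 ≤ 1*(1/c) :=
      mul_le_mul (by linarith) hρ0u hρ00.le zero_le_one
    have h2 : (1:ℝ)*(1/c) = 1/c := by ring
    have h3 : 1/c + 1/c = 2/c := by ring
    linarith
  -- generic comparisons with C*η
  have hCη : 4*ε/c^2 ≤ C*η := by
    have h1 : 4*ε ≤ 7*η := by linarith
    have h2 : 4*ε/c^2 ≤ 7*η/c^2 := by
      rw [div_le_div_iff₀ hcsq hcsq]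
      exact mul_le_mul_of_nonneg_right h1 hcsq.le
    have h3 : C*η = 7*η/c^2 := by rw [hCdef]; ring
    linarith
  have h2εCη : 2*ε ≤ C*η := by
    have h6 : 28*ε ≤ C*ε := mul_le_mul_of_nonneg_right hC28 hε.le
    have h7 : C*ε ≤ C*η := mul_le_mul_of_nonneg_left hηl hC0.le
    linarith
  have h89 : 8*ε < c^2 := by linarith
  have hc2c : c^2 < c := by
    have h := mul_lt_mul_of_pos_left hc1 hc0
    calc c^2 = c*c := by ring
      _ < c*1 := h
      _ = c := by ring
  rcases dichP with ⟨hx0b, hx1b⟩ | ⟨hy0b, hy1b⟩ <;>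
    rcases dichN with ⟨hn1b, hn0b⟩ | ⟨hm1b, hm0b⟩
  · -- P low, N low: right alternative
    right
    have hx0c := hx0b
    rw [hx0] at hx0c
    have htρ : (t*ρ0)*c ≤ 4*ε :=
      aux_num c ε (t*ρ0) (t*ρ0+f) hc0 hε hd10 hDub0 (mul_nonneg ht0 hρ00.le) hx0c
    have ht4 : t ≤ 4*ε/c^2 := aux_div3 c ε t ρ0 hc0 ht0 hρ0l htρ
    have hn0c := hn0b
    rw [hn0] at hn0c
    have hf4 : (1-f)*c ≤ 4*ε :=
      aux_num c ε (1-f) ((1-t)*ρ0+(1-f)) hc0 hε hd00 hDub0' (by linarith) hn0c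
    have hf4' : 1-f ≤ 4*ε/c^2 := aux_div2 c ε (1-f) hc0 hc1 (by linarith) hf4
    exact ⟨by linarith, by linarith, by linarith, by linarith, by linarith, by linarith⟩
  · -- P low, N high: contradiction
    exfalso
    have hx0c := hx0b
    rw [hx0] at hx0c
    have htρ : (t*ρ0)*c ≤ 4*ε :=
      aux_num c ε (t*ρ0) (t*ρ0+f) hc0 hε hd10 hDub0 (mul_nonneg ht0 hρ00.le) hx0c
    have hm0c := hm0b
    rw [hm0] at hm0c
    have htρ' : ((1-t)*ρ0)*c ≤ 4*ε :=
      aux_num c ε ((1-t)*ρ0) ((1-t)*ρ0+(1-f)) hc0 hε hd00 hDub0'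
        (mul_nonneg (by linarith) hρ00.le) hm0c
    have hsum : ρ0*c ≤ 8*ε := by
      have hr : (t*ρ0)*c + ((1-t)*ρ0)*c = ρ0*c := by ring
      linarith
    have hfin : c*c ≤ ρ0*c := mul_le_mul_of_nonneg_right hρ0l hc0.le
    have hc2e : c*c = c^2 := by ring
    linarith
  · -- P high, N low: contradiction
    exfalso
    have hy0c := hy0b
    rw [hy0] at hy0c
    have hfb : f*c ≤ 4*ε :=
      aux_num c ε f (t*ρ0+f) hc0 hε hd10 hDub0 hf0 hy0c
    have hn0c := hn0b
    rw [hn0] at hn0c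
    have hfb' : (1-f)*c ≤ 4*ε :=
      aux_num c ε (1-f) ((1-t)*ρ0+(1-f)) hc0 hε hd00 hDub0' (by linarith) hn0c
    have hsum : 1*c ≤ 8*ε := by
      have hr : f*c + (1-f)*c = 1*c := by ring
      linarith
    linarith
  · -- P high, N high: left alternative
    left
    have hy0c := hy0b
    rw [hy0] at hy0c
    have hfb : f*c ≤ 4*ε :=
      aux_num c ε f (t*ρ0+f) hc0 hε hd10 hDub0 hf0 hy0c
    have hfb' : f ≤ 4*ε/c^2 := aux_div2 c ε f hc0 hc1 hf0 hfb
    have hm0c := hm0b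
    rw [hm0] at hm0c
    have htρ' : ((1-t)*ρ0)*c ≤ 4*ε :=
      aux_num c ε ((1-t)*ρ0) ((1-t)*ρ0+(1-f)) hc0 hε hd00 hDub0'
        (mul_nonneg (by linarith) hρ00.le) hm0c
    have ht4 : 1-t ≤ 4*ε/c^2 := aux_div3 c ε (1-t) ρ0 hc0 (by linarith) hρ0l htρ'
    exact ⟨by linarith, by linarith, by linarith, by linarith, by linarith, by linarith⟩


private lemma fin2_cases (v : Fin 2) : v = 0 ∨ v = 1 := by
  match v with
  | 0 => exact Or.inl rfl
  | 1 => exact Or.inr rfl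

section helpers
variable {Ω : Type} [MeasurableSpace Ω] (μ : Measure Ω) [IsProbabilityMeasure μ]

private lemma condProb_nonneg (s t : Set Ω) : 0 ≤ condProb μ s t :=
  div_nonneg ENNReal.toReal_nonneg ENNReal.toReal_nonneg

private lemma condProb_le_one (s t : Set Ω) : condProb μ s t ≤ 1 := by
  unfold condProb
  rcases eq_or_ne (μ t).toReal 0 with h | h
  · rw [h, div_zero]; norm_num
  · rw [div_le_one (lt_of_le_of_ne ENNReal.toReal_nonneg (Ne.symm h))]
    exact ENNReal.toReal_mono (measure_ne_top μ t) (measure_mono Set.inter_subset_right)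

/-- measure of s ∩ T as condProb times measure of T -/
private lemma condProb_mul (s t : Set Ω) :
    (μ (s ∩ t)).toReal = condProb μ s t * (μ t).toReal := by
  rcases eq_or_ne (μ t).toReal 0 with h | h
  · have ht0 : μ t = 0 := by
      have := measure_ne_top μ t
      exact (ENNReal.toReal_eq_zero_iff _).1 h |>.resolve_right this
    have : μ (s ∩ t) = 0 := measure_mono_null Set.inter_subset_right ht0
    rw [this, h, mul_zero]; simp
  · unfold condProb
    field_simp

private lemma meas_split (g : Ω → Fin 2) (hg : Measurable g) (T : Set Ω)
    (hT : MeasurableSet T) :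
    (μ ({ω | g ω = 0} ∩ T)).toReal + (μ ({ω | g ω = 1} ∩ T)).toReal = (μ T).toReal := by
  have h0 : MeasurableSet {ω | g ω = 0} := hg (measurableSet_singleton 0)
  have h1 : MeasurableSet {ω | g ω = 1} := hg (measurableSet_singleton 1)
  have hdisj : Disjoint ({ω | g ω = 0} ∩ T) ({ω | g ω = 1} ∩ T) := by
    rw [Set.disjoint_left]
    rintro ω ⟨ha, -⟩ ⟨hb, -⟩
    rw [Set.mem_setOf_eq] at ha hb
    rw [ha] at hb
    exact absurd hb (by decide)
  have hU : ({ω | g ω = 0} ∩ T) ∪ ({ω | g ω = 1} ∩ T) = T := by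
    ext ω
    simp only [Set.mem_union, Set.mem_inter_iff, Set.mem_setOf_eq]
    constructor
    · rintro (⟨-, h⟩ | ⟨-, h⟩) <;> exact h
    · intro h
      rcases fin2_cases (g ω) with hv | hv
      · exact Or.inl ⟨hv, h⟩
      · exact Or.inr ⟨hv, h⟩
  rw [← ENNReal.toReal_add (measure_ne_top _ _) (measure_ne_top _ _),
    ← measure_union hdisj (h1.inter hT), hU]

/-- complement rule -/
private lemma condProb_compl (g : Ω → Fin 2) (hg : Measurable g) (T : Set Ω)
    (hT : MeasurableSet T) (hpos : (μ T).toReal ≠ 0) :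
    condProb μ {ω | g ω = 0} T = 1 - condProb μ {ω | g ω = 1} T := by
  have h := meas_split μ g hg T hT
  rw [condProb_mul μ {ω | g ω = 0} T, condProb_mul μ {ω | g ω = 1} T] at h
  have h3 : (condProb μ {ω | g ω = 0} T + condProb μ {ω | g ω = 1} T) * (μ T).toReal
      = 1 * (μ T).toReal := by
    have e : (condProb μ {ω | g ω = 0} T + condProb μ {ω | g ω = 1} T) * (μ T).toReal
        = condProb μ {ω | g ω = 0} T * (μ T).toReal
          + condProb μ {ω | g ω = 1} T * (μ T).toReal := by ring
    rw [e, h]; ring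
  have h4 := mul_right_cancel₀ hpos h3
  linarith

end helpers

private lemma aux_hd (c pq p0 PA tt ff w1 w0 D : ℝ) (hc : 0 < c) (hq : c < pq)
    (hp0 : p0 ≤ 1) (hPA : 0 < PA) (hw0 : w0 = p0*PA) (hD : D = pq*PA)
    (hsum : D = tt*w1 + ff*w0) (hw0pos : 0 < w0) :
    c ≤ tt*(w1/w0) + ff := by
  have e3 : tt*(w1/w0) + ff = (tt*w1 + ff*w0)/w0 := by field_simp
  rw [e3, le_div_iff₀ hw0pos, ← hsum, hD, hw0]
  have h1 : (c*p0)*PA ≤ (c*1)*PA :=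
    mul_le_mul_of_nonneg_right (mul_le_mul_of_nonneg_left hp0 hc.le) hPA.le
  have h2 : c*PA ≤ pq*PA := mul_le_mul_of_nonneg_right hq.le hPA.le
  calc c*(p0*PA) = (c*p0)*PA := by ring
    _ ≤ (c*1)*PA := h1
    _ = c*PA := by ring
    _ ≤ pq*PA := h2

private lemma aux_rho (c p1 p0 PA : ℝ) (hc : 0 < c) (hp1l : c < p1) (hp1u : p1 < 1-c)
    (hp0l : c < p0) (hp0u : p0 ≤ 1) (hPA : 0 < PA) :
    c ≤ (p1*PA)/(p0*PA) ∧ (p1*PA)/(p0*PA) ≤ 1/c := by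
  have hp0 : 0 < p0 := lt_trans hc hp0l
  have e : (p1*PA)/(p0*PA) = p1/p0 := mul_div_mul_right _ _ hPA.ne'
  constructor
  · rw [e, le_div_iff₀ hp0]
    have h1 : c*p0 ≤ c*1 := mul_le_mul_of_nonneg_left hp0u hc.le
    linarith
  · rw [e, div_le_div_iff₀ hp0 hc]
    have h2 : p1*c ≤ 1*c := mul_le_mul_of_nonneg_right (by linarith) hc.le
    linarith

private lemma aux_form (tt ff w1 w0 : ℝ) (hw1 : 0 < w1) (hw0 : 0 < w0)
    (htt : 0 ≤ tt) (hff : 0 ≤ ff) (hD : 0 < tt*w1 + ff*w0) :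
    tt*w1/(tt*w1+ff*w0) = tt*(w1/w0)/(tt*(w1/w0)+ff) ∧
    ff*w0/(tt*w1+ff*w0) = ff/(tt*(w1/w0)+ff) := by
  have e3 : tt*(w1/w0) + ff = (tt*w1 + ff*w0)/w0 := by field_simp
  have hR : 0 < tt*(w1/w0)+ff := by rw [e3]; positivity
  constructor
  · rw [div_eq_div_iff hD.ne' hR.ne']
    field_simp
    try ring
  · rw [div_eq_div_iff hD.ne' hR.ne']
    field_simp
    try ring

/-- **Main theorem.** For every `c ∈ (0, 1/2)` there is a constant `C > 0` (depending only
on `c`) such that for all sufficiently small `ε > 0` with `ε < c` and all `0 < δ ≤ ε²`: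
for any `{0,1}`-valued `(Ŷ, Y, A)` with all group-conditional label and prediction
probabilities in `(c, 1 - c)`, if `(Ŷ, Y, A)` satisfies `(ε, δ)`-sufficiency and exact
separation, then either all group-conditional `PPV, NPV, TPR, TNR` are `≥ 1 - C(ε + δ/ε)`,
or they are all `≤ C(ε + δ/ε)` (flipped classifier), or the group conditional base odds
`{ρ₀, ρ₁}` are `(C(ε + δ/ε), 0)`-approximately equal. -/
theorem stmt_0 (c : ℝ) (hc : c ∈ Set.Ioo (0 : ℝ) (1 / 2)) :
    ∃ C > (0 : ℝ), ∃ ε₀ > (0 : ℝ),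
      ∀ (Ω : Type) (mΩ : MeasurableSpace Ω) (μ : Measure Ω), IsProbabilityMeasure μ →
      ∀ (Yh Y A : Ω → Fin 2), Measurable Yh → Measurable Y → Measurable A →
      -- all group-conditional label probabilities lie in (c, 1 - c)
      (∀ a y : Fin 2, condProb μ {ω | Y ω = y} {ω | A ω = a} ∈ Set.Ioo c (1 - c)) →
      -- all group-conditional prediction probabilities lie in (c, 1 - c)
      (∀ a yh : Fin 2, condProb μ {ω | Yh ω = yh} {ω | A ω = a} ∈ Set.Ioo c (1 - c)) →
      ∀ ε : ℝ, 0 < ε → ε < c → ε < ε₀ →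
      ∀ δ : ℝ, 0 < δ → δ ≤ ε ^ 2 →
      -- (ε, δ)-sufficiency
      (∀ y yh : Fin 2,
        approxEqPair (condProb μ {ω | Y ω = y} {ω | Yh ω = yh ∧ A ω = 0})
          (condProb μ {ω | Y ω = y} {ω | Yh ω = yh ∧ A ω = 1}) ε δ) →
      -- exact separation
      (∀ a y yh : Fin 2,
        condProb μ {ω | Yh ω = yh} {ω | Y ω = y ∧ A ω = a}
          = condProb μ {ω | Yh ω = yh} {ω | Y ω = y}) →
      -- conclusion: one of the three alternatives holds
      ((∀ a : Fin 2,
          condProb μ {ω | Y ω = 1} {ω | Yh ω = 1 ∧ A ω = a} ≥ 1 - C * (ε + δ / ε) ∧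
          condProb μ {ω | Y ω = 0} {ω | Yh ω = 0 ∧ A ω = a} ≥ 1 - C * (ε + δ / ε) ∧
          condProb μ {ω | Yh ω = 1} {ω | Y ω = 1 ∧ A ω = a} ≥ 1 - C * (ε + δ / ε) ∧
          condProb μ {ω | Yh ω = 0} {ω | Y ω = 0 ∧ A ω = a} ≥ 1 - C * (ε + δ / ε)) ∨
       (∀ a : Fin 2,
          condProb μ {ω | Y ω = 1} {ω | Yh ω = 1 ∧ A ω = a} ≤ C * (ε + δ / ε) ∧
          condProb μ {ω | Y ω = 0} {ω | Yh ω = 0 ∧ A ω = a} ≤ C * (ε + δ / ε) ∧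
          condProb μ {ω | Yh ω = 1} {ω | Y ω = 1 ∧ A ω = a} ≤ C * (ε + δ / ε) ∧
          condProb μ {ω | Yh ω = 0} {ω | Y ω = 0 ∧ A ω = a} ≤ C * (ε + δ / ε)) ∨
       approxEqPair
          (condProb μ {ω | Y ω = 1} {ω | A ω = 0} / condProb μ {ω | Y ω = 0} {ω | A ω = 0})
          (condProb μ {ω | Y ω = 1} {ω | A ω = 1} / condProb μ {ω | Y ω = 0} {ω | A ω = 1})
          (C * (ε + δ / ε)) 0) := by
  obtain ⟨hc0, hc2⟩ := hc
  have hc1 : c < 1 := by linarith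
  refine ⟨7/c^2, by positivity, c^2/9, by positivity, ?_⟩
  intro Ω mΩ μ hprob Yh Y A hmYh hmY hmA hYc hYhc ε hε hεc hεe δ hδ hδε suff sep
  haveI := hprob
  have mA : ∀ a : Fin 2, MeasurableSet {ω | A ω = a} := fun a => hmA (measurableSet_singleton a)
  have mY : ∀ y : Fin 2, MeasurableSet {ω | Y ω = y} := fun y => hmY (measurableSet_singleton y)
  have mYh : ∀ v : Fin 2, MeasurableSet {ω | Yh ω = v} := fun v => hmYh (measurableSet_singleton v)
  -- positivity of group masses
  have hPA : ∀ a : Fin 2, 0 < (μ {ω | A ω = a}).toReal := by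
    intro a
    rcases lt_or_eq_of_le (ENNReal.toReal_nonneg : 0 ≤ (μ {ω | A ω = a}).toReal) with h | h
    · exact h
    · exfalso
      have hy := (hYc a 1).1
      unfold condProb at hy
      rw [← h, div_zero] at hy
      linarith
  have hw : ∀ y a : Fin 2, (μ ({ω | Y ω = y} ∩ {ω | A ω = a})).toReal
      = condProb μ {ω | Y ω = y} {ω | A ω = a} * (μ {ω | A ω = a}).toReal :=
    fun y a => condProb_mul μ _ _
  have hwpos : ∀ y a : Fin 2, 0 < (μ ({ω | Y ω = y} ∩ {ω | A ω = a})).toReal := by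
    intro y a; rw [hw]
    exact mul_pos (lt_trans hc0 (hYc a y).1) (hPA a)
  have hvpos : ∀ v a : Fin 2, 0 < (μ ({ω | Yh ω = v} ∩ {ω | A ω = a})).toReal := by
    intro v a; rw [condProb_mul μ]
    exact mul_pos (lt_trans hc0 (hYhc a v).1) (hPA a)
  have hJY : ∀ y : Fin 2, 0 < (μ {ω | Y ω = y}).toReal := by
    intro y
    have hsplit := meas_split μ A hmA {ω | Y ω = y} (mY y)
    have h0 : 0 < (μ ({ω | A ω = 0} ∩ {ω | Y ω = y})).toReal := by
      rw [Set.inter_comm]; exact hwpos y 0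
    have h1 : 0 ≤ (μ ({ω | A ω = 1} ∩ {ω | Y ω = y})).toReal := ENNReal.toReal_nonneg
    linarith
  set t := condProb μ {ω | Yh ω = 1} {ω | Y ω = 1} with htdef
  set f := condProb μ {ω | Yh ω = 1} {ω | Y ω = 0} with hfdef
  have ht0 : 0 ≤ t := condProb_nonneg μ _ _
  have ht1 : t ≤ 1 := condProb_le_one μ _ _
  have hf0 : 0 ≤ f := condProb_nonneg μ _ _
  have hf1 : f ≤ 1 := condProb_le_one μ _ _
  have hcompl1 : condProb μ {ω | Yh ω = 0} {ω | Y ω = 1} = 1 - t :=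
    condProb_compl μ Yh hmYh _ (mY 1) (hJY 1).ne'
  have hcompl0 : condProb μ {ω | Yh ω = 0} {ω | Y ω = 0} = 1 - f :=
    condProb_compl μ Yh hmYh _ (mY 0) (hJY 0).ne'
  have hsep' : ∀ a y v : Fin 2, condProb μ {ω | Yh ω = v} ({ω | Y ω = y} ∩ {ω | A ω = a})
      = condProb μ {ω | Yh ω = v} {ω | Y ω = y} := fun a y v => sep a y v
  have hu : ∀ a y v : Fin 2,
      (μ ({ω | Yh ω = v} ∩ ({ω | Y ω = y} ∩ {ω | A ω = a}))).toReal
      = condProb μ {ω | Yh ω = v} {ω | Y ω = y}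
        * (μ ({ω | Y ω = y} ∩ {ω | A ω = a})).toReal := by
    intro a y v
    rw [condProb_mul μ, hsep']
  have hswap : ∀ (y v a : Fin 2),
      ({ω | Y ω = y} ∩ ({ω | Yh ω = v} ∩ {ω | A ω = a}))
      = ({ω | Yh ω = v} ∩ ({ω | Y ω = y} ∩ {ω | A ω = a})) := by
    intro y v a
    ext ω
    simp only [Set.mem_inter_iff, Set.mem_setOf_eq]
    tauto
  -- denominators
  have hden1 : ∀ a : Fin 2, (μ ({ω | Yh ω = 1} ∩ {ω | A ω = a})).toReal
      = t * (μ ({ω | Y ω = 1} ∩ {ω | A ω = a})).toReal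
        + f * (μ ({ω | Y ω = 0} ∩ {ω | A ω = a})).toReal := by
    intro a
    have hsplit := meas_split μ Y hmY ({ω | Yh ω = 1} ∩ {ω | A ω = a}) ((mYh 1).inter (mA a))
    rw [hswap 0 1 a, hswap 1 1 a, hu a 0 1, hu a 1 1] at hsplit
    rw [← htdef, ← hfdef] at hsplit
    linarith
  have hden0 : ∀ a : Fin 2, (μ ({ω | Yh ω = 0} ∩ {ω | A ω = a})).toReal
      = (1-t) * (μ ({ω | Y ω = 1} ∩ {ω | A ω = a})).toReal
        + (1-f) * (μ ({ω | Y ω = 0} ∩ {ω | A ω = a})).toReal := by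
    intro a
    have hsplit := meas_split μ Y hmY ({ω | Yh ω = 0} ∩ {ω | A ω = a}) ((mYh 0).inter (mA a))
    rw [hswap 0 0 a, hswap 1 0 a, hu a 0 0, hu a 1 0] at hsplit
    rw [hcompl1, hcompl0] at hsplit
    linarith
  have hW1pos : ∀ a : Fin 2, 0 < (μ ({ω | Y ω = 1} ∩ {ω | A ω = a})).toReal :=
    fun a => hwpos 1 a
  have hW0pos : ∀ a : Fin 2, 0 < (μ ({ω | Y ω = 0} ∩ {ω | A ω = a})).toReal :=
    fun a => hwpos 0 a
  -- bounds for ρ a = (μ ({ω | Y ω = 1} ∩ {ω | A ω = a})).toReal / (μ ({ω | Y ω = 0} ∩ {ω | A ω = a})).toReal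
  have hρb : ∀ a : Fin 2, c ≤ (μ ({ω | Y ω = 1} ∩ {ω | A ω = a})).toReal/(μ ({ω | Y ω = 0} ∩ {ω | A ω = a})).toReal ∧ (μ ({ω | Y ω = 1} ∩ {ω | A ω = a})).toReal/(μ ({ω | Y ω = 0} ∩ {ω | A ω = a})).toReal ≤ 1/c := by
    intro a
    have e1 : (μ ({ω | Y ω = 1} ∩ {ω | A ω = a})).toReal = condProb μ {ω | Y ω = 1} {ω | A ω = a} * (μ {ω | A ω = a}).toReal := hw 1 a
    have e0 : (μ ({ω | Y ω = 0} ∩ {ω | A ω = a})).toReal = condProb μ {ω | Y ω = 0} {ω | A ω = a} * (μ {ω | A ω = a}).toReal := hw 0 a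
    rw [e1, e0]
    exact aux_rho c _ _ _ hc0 (hYc a 1).1 (hYc a 1).2 (hYc a 0).1
      (condProb_le_one μ _ _) (hPA a)
  -- denominator lower bounds
  have hd1 : ∀ a : Fin 2, c ≤ t*((μ ({ω | Y ω = 1} ∩ {ω | A ω = a})).toReal/(μ ({ω | Y ω = 0} ∩ {ω | A ω = a})).toReal) + f := by
    intro a
    exact aux_hd c (condProb μ {ω | Yh ω = 1} {ω | A ω = a})
      (condProb μ {ω | Y ω = 0} {ω | A ω = a}) ((μ {ω | A ω = a}).toReal)
      t f ((μ ({ω | Y ω = 1} ∩ {ω | A ω = a})).toReal) ((μ ({ω | Y ω = 0} ∩ {ω | A ω = a})).toReal) ((μ ({ω | Yh ω = 1} ∩ {ω | A ω = a})).toReal)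
      hc0 (hYhc a 1).1 (condProb_le_one μ _ _) (hPA a) (hw 0 a) (condProb_mul μ _ _)
      (hden1 a) (hW0pos a)
  have hd0 : ∀ a : Fin 2, c ≤ (1-t)*((μ ({ω | Y ω = 1} ∩ {ω | A ω = a})).toReal/(μ ({ω | Y ω = 0} ∩ {ω | A ω = a})).toReal) + (1-f) := by
    intro a
    exact aux_hd c (condProb μ {ω | Yh ω = 0} {ω | A ω = a})
      (condProb μ {ω | Y ω = 0} {ω | A ω = a}) ((μ {ω | A ω = a}).toReal)
      (1-t) (1-f) ((μ ({ω | Y ω = 1} ∩ {ω | A ω = a})).toReal) ((μ ({ω | Y ω = 0} ∩ {ω | A ω = a})).toReal) ((μ ({ω | Yh ω = 0} ∩ {ω | A ω = a})).toReal)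
      hc0 (hYhc a 0).1 (condProb_le_one μ _ _) (hPA a) (hw 0 a) (condProb_mul μ _ _)
      (hden0 a) (hW0pos a)
  -- formulas for the four conditional probabilities
  have hsetT : ∀ v a : Fin 2, {ω : Ω | Yh ω = v ∧ A ω = a}
      = ({ω | Yh ω = v} ∩ {ω | A ω = a}) := fun v a => rfl
  have hD1pos : ∀ a : Fin 2, 0 < t*((μ ({ω | Y ω = 1} ∩ {ω | A ω = a})).toReal) + f*((μ ({ω | Y ω = 0} ∩ {ω | A ω = a})).toReal) := by
    intro a; rw [← hden1 a]; exact hvpos 1 a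
  have hD0pos : ∀ a : Fin 2, 0 < (1-t)*((μ ({ω | Y ω = 1} ∩ {ω | A ω = a})).toReal) + (1-f)*((μ ({ω | Y ω = 0} ∩ {ω | A ω = a})).toReal) := by
    intro a; rw [← hden0 a]; exact hvpos 0 a
  have ePPV : ∀ a : Fin 2, condProb μ {ω | Y ω = 1} {ω | Yh ω = 1 ∧ A ω = a}
      = t*((μ ({ω | Y ω = 1} ∩ {ω | A ω = a})).toReal/(μ ({ω | Y ω = 0} ∩ {ω | A ω = a})).toReal)/(t*((μ ({ω | Y ω = 1} ∩ {ω | A ω = a})).toReal/(μ ({ω | Y ω = 0} ∩ {ω | A ω = a})).toReal)+f) := by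
    intro a
    have : condProb μ {ω | Y ω = 1} {ω | Yh ω = 1 ∧ A ω = a}
        = t*((μ ({ω | Y ω = 1} ∩ {ω | A ω = a})).toReal)/(t*((μ ({ω | Y ω = 1} ∩ {ω | A ω = a})).toReal)+f*((μ ({ω | Y ω = 0} ∩ {ω | A ω = a})).toReal)) := by
      unfold condProb
      rw [hsetT, hswap 1 1 a, hu a 1 1, hden1 a, ← htdef]
    rw [this]
    exact (aux_form t f ((μ ({ω | Y ω = 1} ∩ {ω | A ω = a})).toReal) ((μ ({ω | Y ω = 0} ∩ {ω | A ω = a})).toReal) (hW1pos a) (hW0pos a) ht0 hf0 (hD1pos a)).1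
  have eQ : ∀ a : Fin 2, condProb μ {ω | Y ω = 0} {ω | Yh ω = 1 ∧ A ω = a}
      = f/(t*((μ ({ω | Y ω = 1} ∩ {ω | A ω = a})).toReal/(μ ({ω | Y ω = 0} ∩ {ω | A ω = a})).toReal)+f) := by
    intro a
    have : condProb μ {ω | Y ω = 0} {ω | Yh ω = 1 ∧ A ω = a}
        = f*((μ ({ω | Y ω = 0} ∩ {ω | A ω = a})).toReal)/(t*((μ ({ω | Y ω = 1} ∩ {ω | A ω = a})).toReal)+f*((μ ({ω | Y ω = 0} ∩ {ω | A ω = a})).toReal)) := by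
      unfold condProb
      rw [hsetT, hswap 0 1 a, hu a 0 1, hden1 a, ← hfdef]
    rw [this]
    exact (aux_form t f ((μ ({ω | Y ω = 1} ∩ {ω | A ω = a})).toReal) ((μ ({ω | Y ω = 0} ∩ {ω | A ω = a})).toReal) (hW1pos a) (hW0pos a) ht0 hf0 (hD1pos a)).2
  have eM : ∀ a : Fin 2, condProb μ {ω | Y ω = 1} {ω | Yh ω = 0 ∧ A ω = a}
      = (1-t)*((μ ({ω | Y ω = 1} ∩ {ω | A ω = a})).toReal/(μ ({ω | Y ω = 0} ∩ {ω | A ω = a})).toReal)/((1-t)*((μ ({ω | Y ω = 1} ∩ {ω | A ω = a})).toReal/(μ ({ω | Y ω = 0} ∩ {ω | A ω = a})).toReal)+(1-f)) := by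
    intro a
    have : condProb μ {ω | Y ω = 1} {ω | Yh ω = 0 ∧ A ω = a}
        = (1-t)*((μ ({ω | Y ω = 1} ∩ {ω | A ω = a})).toReal)/((1-t)*((μ ({ω | Y ω = 1} ∩ {ω | A ω = a})).toReal)+(1-f)*((μ ({ω | Y ω = 0} ∩ {ω | A ω = a})).toReal)) := by
      unfold condProb
      rw [hsetT, hswap 1 0 a, hu a 1 0, hden0 a, hcompl1]
    rw [this]
    exact (aux_form (1-t) (1-f) ((μ ({ω | Y ω = 1} ∩ {ω | A ω = a})).toReal) ((μ ({ω | Y ω = 0} ∩ {ω | A ω = a})).toReal) (hW1pos a) (hW0pos a)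
      (by linarith) (by linarith) (hD0pos a)).1
  have eN : ∀ a : Fin 2, condProb μ {ω | Y ω = 0} {ω | Yh ω = 0 ∧ A ω = a}
      = (1-f)/((1-t)*((μ ({ω | Y ω = 1} ∩ {ω | A ω = a})).toReal/(μ ({ω | Y ω = 0} ∩ {ω | A ω = a})).toReal)+(1-f)) := by
    intro a
    have : condProb μ {ω | Y ω = 0} {ω | Yh ω = 0 ∧ A ω = a}
        = (1-f)*((μ ({ω | Y ω = 0} ∩ {ω | A ω = a})).toReal)/((1-t)*((μ ({ω | Y ω = 1} ∩ {ω | A ω = a})).toReal)+(1-f)*((μ ({ω | Y ω = 0} ∩ {ω | A ω = a})).toReal)) := by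
      unfold condProb
      rw [hsetT, hswap 0 0 a, hu a 0 0, hden0 a, hcompl0]
    rw [this]
    exact (aux_form (1-t) (1-f) ((μ ({ω | Y ω = 1} ∩ {ω | A ω = a})).toReal) ((μ ({ω | Y ω = 0} ∩ {ω | A ω = a})).toReal) (hW1pos a) (hW0pos a)
      (by linarith) (by linarith) (hD0pos a)).2
  -- base-odds ratio identity
  have eρ : ∀ a : Fin 2, condProb μ {ω | Y ω = 1} {ω | A ω = a}
      / condProb μ {ω | Y ω = 0} {ω | A ω = a} = (μ ({ω | Y ω = 1} ∩ {ω | A ω = a})).toReal/(μ ({ω | Y ω = 0} ∩ {ω | A ω = a})).toReal := by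
    intro a
    have e1 := hw 1 a
    have e0 := hw 0 a
    rw [e1, e0, mul_div_mul_right _ _ (hPA a).ne']
  unfold approxEqPair at suff
  -- main case split
  rcases le_or_gt ((μ ({ω | Y ω = 1} ∩ {ω | A ω = 0})).toReal/(μ ({ω | Y ω = 0} ∩ {ω | A ω = 0})).toReal) (((μ ({ω | Y ω = 1} ∩ {ω | A ω = 1})).toReal/(μ ({ω | Y ω = 0} ∩ {ω | A ω = 1})).toReal) * Real.exp ((7/c^2) * (ε + δ/ε))) with hb0 | hb0
  · rcases le_or_gt ((μ ({ω | Y ω = 1} ∩ {ω | A ω = 1})).toReal/(μ ({ω | Y ω = 0} ∩ {ω | A ω = 1})).toReal) (((μ ({ω | Y ω = 1} ∩ {ω | A ω = 0})).toReal/(μ ({ω | Y ω = 0} ∩ {ω | A ω = 0})).toReal) * Real.exp ((7/c^2) * (ε + δ/ε))) with hb1 | hb1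
    · -- alternative 3
      right; right
      unfold approxEqPair
      constructor
      · rw [eρ 0, eρ 1]; linarith
      · rw [eρ 0, eρ 1]; linarith
    · -- ρ1 > ρ0 * exp: apply core with roles swapped
      have hbig : ((μ ({ω | Y ω = 1} ∩ {ω | A ω = 0})).toReal/(μ ({ω | Y ω = 0} ∩ {ω | A ω = 0})).toReal) * Real.exp ((7/c^2) * (ε + δ/ε)) ≤ (μ ({ω | Y ω = 1} ∩ {ω | A ω = 1})).toReal/(μ ({ω | Y ω = 0} ∩ {ω | A ω = 1})).toReal := hb1.le
      have core := fair_core c ε δ t f ((μ ({ω | Y ω = 1} ∩ {ω | A ω = 1})).toReal/(μ ({ω | Y ω = 0} ∩ {ω | A ω = 1})).toReal) ((μ ({ω | Y ω = 1} ∩ {ω | A ω = 0})).toReal/(μ ({ω | Y ω = 0} ∩ {ω | A ω = 0})).toReal) hc0 hc2 hε hεe hδ hδε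
        ht0 ht1 hf0 hf1 (hρb 1).1 (hρb 1).2 (hρb 0).1 (hρb 0).2
        (hd1 1) (hd1 0) (hd0 1) (hd0 0)
        (by rw [← ePPV 1, ← ePPV 0]; exact (suff 1 1).2)
        (by rw [← ePPV 1, ← ePPV 0]; exact (suff 1 1).1)
        (by rw [← eQ 1, ← eQ 0]; exact (suff 0 1).2)
        (by rw [← eQ 1, ← eQ 0]; exact (suff 0 1).1)
        (by rw [← eN 1, ← eN 0]; exact (suff 0 0).2)
        (by rw [← eN 1, ← eN 0]; exact (suff 0 0).1)
        (by rw [← eM 1, ← eM 0]; exact (suff 1 0).2)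
        (by rw [← eM 1, ← eM 0]; exact (suff 1 0).1)
        hbig
      rcases core with ⟨k1, k2, k3, k4, k5, k6⟩ | ⟨k1, k2, k3, k4, k5, k6⟩
      · left
        intro a
        refine ⟨?_, ?_, ?_, ?_⟩
        · rw [ge_iff_le, ePPV a]
          rcases fin2_cases a with ha | ha <;> rw [ha]
          · exact k4
          · exact k3
        · rw [ge_iff_le, eN a]
          rcases fin2_cases a with ha | ha <;> rw [ha]
          · exact k6
          · exact k5
        · rw [ge_iff_le, sep a 1 1, ← htdef]; exact k1
        · rw [ge_iff_le, sep a 0 0, hcompl0]; linarith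
      · right; left
        intro a
        refine ⟨?_, ?_, ?_, ?_⟩
        · rw [ePPV a]
          rcases fin2_cases a with ha | ha <;> rw [ha]
          · exact k4
          · exact k3
        · rw [eN a]
          rcases fin2_cases a with ha | ha <;> rw [ha]
          · exact k6
          · exact k5
        · rw [sep a 1 1, ← htdef]; exact k1
        · rw [sep a 0 0, hcompl0]; linarith
  · -- ρ0 > ρ1 * exp
    have hbig : ((μ ({ω | Y ω = 1} ∩ {ω | A ω = 1})).toReal/(μ ({ω | Y ω = 0} ∩ {ω | A ω = 1})).toReal) * Real.exp ((7/c^2) * (ε + δ/ε)) ≤ (μ ({ω | Y ω = 1} ∩ {ω | A ω = 0})).toReal/(μ ({ω | Y ω = 0} ∩ {ω | A ω = 0})).toReal := hb0.le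
    have core := fair_core c ε δ t f ((μ ({ω | Y ω = 1} ∩ {ω | A ω = 0})).toReal/(μ ({ω | Y ω = 0} ∩ {ω | A ω = 0})).toReal) ((μ ({ω | Y ω = 1} ∩ {ω | A ω = 1})).toReal/(μ ({ω | Y ω = 0} ∩ {ω | A ω = 1})).toReal) hc0 hc2 hε hεe hδ hδε
      ht0 ht1 hf0 hf1 (hρb 0).1 (hρb 0).2 (hρb 1).1 (hρb 1).2
      (hd1 0) (hd1 1) (hd0 0) (hd0 1)
      (by rw [← ePPV 0, ← ePPV 1]; exact (suff 1 1).1)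
      (by rw [← ePPV 0, ← ePPV 1]; exact (suff 1 1).2)
      (by rw [← eQ 0, ← eQ 1]; exact (suff 0 1).1)
      (by rw [← eQ 0, ← eQ 1]; exact (suff 0 1).2)
      (by rw [← eN 0, ← eN 1]; exact (suff 0 0).1)
      (by rw [← eN 0, ← eN 1]; exact (suff 0 0).2)
      (by rw [← eM 0, ← eM 1]; exact (suff 1 0).1)
      (by rw [← eM 0, ← eM 1]; exact (suff 1 0).2)
      hbig
    rcases core with ⟨k1, k2, k3, k4, k5, k6⟩ | ⟨k1, k2, k3, k4, k5, k6⟩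
    · left
      intro a
      refine ⟨?_, ?_, ?_, ?_⟩
      · rw [ge_iff_le, ePPV a]
        rcases fin2_cases a with ha | ha <;> rw [ha]
        · exact k3
        · exact k4
      · rw [ge_iff_le, eN a]
        rcases fin2_cases a with ha | ha <;> rw [ha]
        · exact k5
        · exact k6
      · rw [ge_iff_le, sep a 1 1, ← htdef]; exact k1
      · rw [ge_iff_le, sep a 0 0, hcompl0]; linarith
    · right; left
      intro a
      refine ⟨?_, ?_, ?_, ?_⟩
      · rw [ePPV a]
        rcases fin2_cases a with ha | ha <;> rw [ha]
        · exact k3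
        · exact k4
      · rw [eN a]
        rcases fin2_cases a with ha | ha <;> rw [ha]
        · exact k5
        · exact k6
      · rw [sep a 1 1, ← htdef]; exact k1
      · rw [sep a 0 0, hcompl0]; linarith
end

section
/- Let (Ŷ, Y, A) be {0,1}-valued random variables and let a ∈ {0,1} be such that Pr[Y = 1, A = a] > 0, Pr[Y = 0, A = a] > 0, Pr[Ŷ = 1, A = a] > 0, and PPV_a > 0. Then FPR_a = ρ_a · (FDR_a / PPV_a) · TPR_a, where ρ_a = Pr[Y = 1 | A = a]/Pr[Y = 0 | A = a]. -/
open MeasureTheory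

/-- `FPR_a = ρ_a · (FDR_a / PPV_a) · TPR_a`, where
`ρ_a = Pr[Y = 1 | A = a] / Pr[Y = 0 | A = a]`. -/
theorem stmt_3 {Ω : Type*} [MeasurableSpace Ω] (μ : Measure Ω) [IsProbabilityMeasure μ]
    (Yh Y A : Ω → Fin 2) (hYh : Measurable Yh) (hY : Measurable Y) (hA : Measurable A)
    (a : Fin 2)
    (hY1 : 0 < μ {ω | Y ω = 1 ∧ A ω = a})
    (hY0 : 0 < μ {ω | Y ω = 0 ∧ A ω = a})
    (hYh1 : 0 < μ {ω | Yh ω = 1 ∧ A ω = a})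
    (hPPV : 0 < condProb μ {ω | Y ω = 1} {ω | Yh ω = 1 ∧ A ω = a}) :
    condProb μ {ω | Yh ω = 1} {ω | Y ω = 0 ∧ A ω = a}
      = (condProb μ {ω | Y ω = 1} {ω | A ω = a} / condProb μ {ω | Y ω = 0} {ω | A ω = a})
        * (condProb μ {ω | Y ω = 0} {ω | Yh ω = 1 ∧ A ω = a}
            / condProb μ {ω | Y ω = 1} {ω | Yh ω = 1 ∧ A ω = a})
        * condProb μ {ω | Yh ω = 1} {ω | Y ω = 1 ∧ A ω = a} := by
  unfold condProb at *
  have e1 : ({ω | Y ω = 0} ∩ {ω | Yh ω = 1 ∧ A ω = a})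
      = ({ω | Yh ω = 1} ∩ {ω | Y ω = 0 ∧ A ω = a}) := by
    ext ω; simp [Set.mem_inter_iff, Set.mem_setOf_eq]; tauto
  have e2 : ({ω | Y ω = 1} ∩ {ω | Yh ω = 1 ∧ A ω = a})
      = ({ω | Yh ω = 1} ∩ {ω | Y ω = 1 ∧ A ω = a}) := by
    ext ω; simp [Set.mem_inter_iff, Set.mem_setOf_eq]; tauto
  have e3 : ({ω | Y ω = 1} ∩ {ω | A ω = a}) = {ω | Y ω = 1 ∧ A ω = a} := rfl
  have e4 : ({ω | Y ω = 0} ∩ {ω | A ω = a}) = {ω | Y ω = 0 ∧ A ω = a} := rfl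
  rw [e2] at hPPV
  rw [e1, e2, e3, e4]
  have hfin : ∀ s : Set Ω, μ s ≠ ⊤ := fun s => measure_ne_top μ s
  have pY1 : 0 < (μ {ω | Y ω = 1 ∧ A ω = a}).toReal := ENNReal.toReal_pos hY1.ne' (hfin _)
  have pY0 : 0 < (μ {ω | Y ω = 0 ∧ A ω = a}).toReal := ENNReal.toReal_pos hY0.ne' (hfin _)
  have pYh : 0 < (μ {ω | Yh ω = 1 ∧ A ω = a}).toReal := ENNReal.toReal_pos hYh1.ne' (hfin _)
  have hAa : 0 < (μ {ω | A ω = a}).toReal := by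
    refine ENNReal.toReal_pos (fun h => ?_) (hfin _)
    have : μ {ω | Y ω = 1 ∧ A ω = a} ≤ μ {ω | A ω = a} :=
      measure_mono (fun ω hω => hω.2)
    simp [h] at this
    exact absurd this hY1.ne'
  have hTP : 0 < (μ ({ω | Yh ω = 1} ∩ {ω | Y ω = 1 ∧ A ω = a})).toReal := by
    by_contra hc
    push_neg at hc
    have h0 : (μ ({ω | Yh ω = 1} ∩ {ω | Y ω = 1 ∧ A ω = a})).toReal = 0 :=
      le_antisymm hc ENNReal.toReal_nonneg
    rw [h0] at hPPV
    simp at hPPV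
  field_simp
end

section
/- Let (Ŷ, Y, A) be {0,1}-valued random variables such that for all a, y, ŷ ∈ {0,1}, Pr[Y = y, A = a] > 0 and Pr[Ŷ = ŷ, A = a] > 0. Suppose (Ŷ, Y, A) satisfies both exact separation and exact sufficiency, and suppose ρ₀ ≠ ρ₁, where ρ_a = Pr[Y = 1 | A = a]/Pr[Y = 0 | A = a]. Then either Pr[Ŷ = Y] = 1 (the classifier is perfect) or Pr[Ŷ = 1 − Y] = 1 (the classifier is perfectly flipped). -/
/-! Fix `ŷ` and write `u, v` for `Pr[Ŷ = ŷ | Y = 0]`, `Pr[Ŷ = ŷ | Y = 1]` and `x_a, y_a` for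
`Pr[Y = 0, A = a]`, `Pr[Y = 1, A = a]`. Separation gives `Pr[Ŷ = ŷ, Y = 1, A = a] = v y_a` and
`Pr[Ŷ = ŷ, A = a] = u x_a + v y_a`; sufficiency says that their ratio
`c = Pr[Y = 1 | Ŷ = ŷ, A = a]` does not depend on `a`. Eliminating `c` from
`v y_a = c (u x_a + v y_a)`, `a = 0, 1`, gives `u v (x₁ y₀ - x₀ y₁) = 0`, and `ρ₀ ≠ ρ₁` says
exactly that `x₁ y₀ ≠ x₀ y₁`. So `Pr[Ŷ = ŷ | Y = 0] · Pr[Ŷ = ŷ | Y = 1] = 0` for both `ŷ`, and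
since `Pr[Ŷ = 0 | Y = y] + Pr[Ŷ = 1 | Y = y] = 1`, the classifier is perfect or flipped. -/

open MeasureTheory

open Set

lemma mul_eq_zero_of_eq_mul_add_of_det_ne_zero {R : Type*} [CommRing R] [NoZeroDivisors R]
    {u v c x₀ y₀ x₁ y₁ : R} (h₀ : v * y₀ = c * (u * x₀ + v * y₀))
    (h₁ : v * y₁ = c * (u * x₁ + v * y₁)) (hdet : x₀ * y₁ ≠ x₁ * y₀) : u * v = 0 := by
  have h : u * v * (x₁ * y₀ - x₀ * y₁) = 0 := by
    linear_combination (u * x₁ + v * y₁) * h₀ - (u * x₀ + v * y₀) * h₁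
  exact (mul_eq_zero.1 h).resolve_right (sub_ne_zero.2 hdet.symm)

section condProb

variable {Ω : Type*} [MeasurableSpace Ω] {μ : Measure Ω} {s s' t : Set Ω}

lemma condProb_eq_div (s t : Set Ω) : condProb μ s t = μ.real (s ∩ t) / μ.real t := rfl

variable [IsFiniteMeasure μ]

lemma measureReal_inter_eq_condProb_mul (s t : Set Ω) :
    μ.real (s ∩ t) = condProb μ s t * μ.real t := by
  rcases eq_or_ne (μ.real t) 0 with ht | ht
  · rw [ht, mul_zero]
    exact measureReal_mono_null inter_subset_right ht
  · exact (div_mul_cancel₀ _ ht).symm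

lemma measure_inter_eq_zero_of_condProb_eq_zero (h : condProb μ s t = 0) : μ (s ∩ t) = 0 := by
  rw [← measureReal_eq_zero_iff, measureReal_inter_eq_condProb_mul, h, zero_mul]

lemma condProb_div_condProb (ht : μ t ≠ 0) :
    condProb μ s t / condProb μ s' t = μ.real (s ∩ t) / μ.real (s' ∩ t) :=
  div_div_div_cancel_right₀ ((measureReal_ne_zero_iff).2 ht) _ _

lemma condProb_add_condProb_compl (hs : MeasurableSet s) (ht : μ t ≠ 0) :
    condProb μ s t + condProb μ sᶜ t = 1 := by
  rw [condProb_eq_div, condProb_eq_div, ← add_div,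
    div_eq_one_iff_eq ((measureReal_ne_zero_iff).2 ht), inter_comm, inter_comm sᶜ, ← sdiff_eq,
    measureReal_inter_add_sdiff hs]

end condProb

lemma setOf_eq_one_eq_compl {Ω : Type*} (f : Ω → Fin 2) :
    {ω | f ω = 1} = {ω | f ω = 0}ᶜ := by
  ext ω
  show f ω = 1 ↔ f ω ≠ 0
  omega

lemma measureReal_eq_add_of_fin_two {Ω : Type*} [MeasurableSpace Ω] {μ : Measure Ω}
    [IsFiniteMeasure μ] {f : Ω → Fin 2} (hf : Measurable f) (t : Set Ω) :
    μ.real t = μ.real ({ω | f ω = 0} ∩ t) + μ.real ({ω | f ω = 1} ∩ t) := by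
  rw [setOf_eq_one_eq_compl, inter_comm, inter_comm _ t, ← sdiff_eq]
  exact (measureReal_inter_add_sdiff (hf (measurableSet_singleton 0))).symm

lemma condProb_eq_zero_add_condProb_eq_one {Ω : Type*} [MeasurableSpace Ω] {μ : Measure Ω}
    [IsFiniteMeasure μ] {f : Ω → Fin 2} (hf : Measurable f) {t : Set Ω} (ht : μ t ≠ 0) :
    condProb μ {ω | f ω = 0} t + condProb μ {ω | f ω = 1} t = 1 := by
  rw [setOf_eq_one_eq_compl]
  exact condProb_add_condProb_compl (hf (measurableSet_singleton 0)) ht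

lemma measure_setOf_eq_comp_eq_one {Ω α β : Type*} [MeasurableSpace Ω] {μ : Measure Ω}
    [IsProbabilityMeasure μ] [Countable α] [Countable β] {f : Ω → β} {g : Ω → α} (σ : α → β)
    (h : ∀ i j, j ≠ σ i → μ ({ω | f ω = j} ∩ {ω | g ω = i}) = 0) :
    μ {ω | f ω = σ (g ω)} = 1 := by
  have hnull : μ {ω | f ω = σ (g ω)}ᶜ = 0 := by
    refine measure_mono_null (fun ω hω => ?_)
      (measure_iUnion_null fun i => measure_iUnion_null fun j =>
        measure_iUnion_null fun hj : j ≠ σ i => h i j hj)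
    simp only [mem_iUnion]
    exact ⟨g ω, f ω, by simpa [eq_comm] using hω, rfl, rfl⟩
  rw [measure_congr (ae_eq_univ.2 hnull), measure_univ]

section FinTwo

variable {Ω : Type*} [MeasurableSpace Ω] {μ : Measure Ω} [IsProbabilityMeasure μ]
  {f g : Ω → Fin 2}

lemma measure_setOf_eq_eq_one_of_fin_two (h₁₀ : μ ({ω | f ω = 1} ∩ {ω | g ω = 0}) = 0)
    (h₀₁ : μ ({ω | f ω = 0} ∩ {ω | g ω = 1}) = 0) : μ {ω | f ω = g ω} = 1 := by
  refine measure_setOf_eq_comp_eq_one (σ := id) fun i j hij => ?_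
  fin_cases i <;> fin_cases j
  · exact absurd rfl hij
  · exact h₁₀
  · exact h₀₁
  · exact absurd rfl hij

lemma measure_setOf_eq_one_sub_eq_one_of_fin_two (h₀₀ : μ ({ω | f ω = 0} ∩ {ω | g ω = 0}) = 0)
    (h₁₁ : μ ({ω | f ω = 1} ∩ {ω | g ω = 1}) = 0) : μ {ω | f ω = 1 - g ω} = 1 := by
  refine measure_setOf_eq_comp_eq_one (σ := fun i => 1 - i) fun i j hij => ?_
  fin_cases i <;> fin_cases j
  · exact h₀₀
  · exact absurd rfl hij
  · exact absurd rfl hij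
  · exact h₁₁

end FinTwo

theorem stmt_5_general {Ω : Type*} [MeasurableSpace Ω] (μ : Measure Ω) [IsProbabilityMeasure μ]
    (Yh Y A : Ω → Fin 2) (hYh : Measurable Yh) (hY : Measurable Y)
    (hposY : ∀ a y : Fin 2, 0 < μ {ω | Y ω = y ∧ A ω = a})
    (hsep : ∀ a y yh : Fin 2,
      condProb μ {ω | Yh ω = yh} {ω | Y ω = y ∧ A ω = a}
        = condProb μ {ω | Yh ω = yh} {ω | Y ω = y})
    (hsuff : ∀ a y yh : Fin 2,
      condProb μ {ω | Y ω = y} {ω | Yh ω = yh ∧ A ω = a}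
        = condProb μ {ω | Y ω = y} {ω | Yh ω = yh})
    (hrho : condProb μ {ω | Y ω = 1} {ω | A ω = 0} / condProb μ {ω | Y ω = 0} {ω | A ω = 0}
      ≠ condProb μ {ω | Y ω = 1} {ω | A ω = 1} / condProb μ {ω | Y ω = 0} {ω | A ω = 1}) :
    μ {ω | Yh ω = Y ω} = 1 ∨ μ {ω | Yh ω = 1 - Y ω} = 1 := by
  set p : Fin 2 → Fin 2 → ℝ := fun yh y => condProb μ {ω | Yh ω = yh} {ω | Y ω = y}
  set m : Fin 2 → Fin 2 → ℝ := fun a y => μ.real {ω | Y ω = y ∧ A ω = a}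
  have hjoint a y yh : μ.real ({ω | Y ω = y} ∩ {ω | Yh ω = yh ∧ A ω = a}) = p yh y * m a y := by
    rw [show {ω | Y ω = y} ∩ {ω | Yh ω = yh ∧ A ω = a} = {ω | Yh ω = yh} ∩ {ω | Y ω = y ∧ A ω = a}
      from ext fun _ => and_left_comm, measureReal_inter_eq_condProb_mul, hsep]
  have hfraction a yh : p yh 1 * m a 1 = condProb μ {ω | Y ω = 1} {ω | Yh ω = yh} *
      (p yh 0 * m a 0 + p yh 1 * m a 1) := by
    rw [← hjoint, ← hjoint, ← measureReal_eq_add_of_fin_two hY, ← hsuff a 1 yh,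
      measureReal_inter_eq_condProb_mul]
  have hdet : m 0 0 * m 1 1 ≠ m 1 0 * m 0 1 := by
    have hm a y : m a y ≠ 0 := (measureReal_ne_zero_iff).2 (hposY a y).ne'
    have hgroup a : μ {ω | A ω = a} ≠ 0 :=
      ((hposY a 0).trans_le (measure_mono fun _ h => h.2)).ne'
    have hodds : m 0 1 / m 0 0 ≠ m 1 1 / m 1 0 := by
      rwa [condProb_div_condProb (hgroup 0), condProb_div_condProb (hgroup 1)] at hrho
    exact fun h => hodds ((div_eq_div_iff (hm 0 0) (hm 1 0)).2 (by linarith))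
  have hprod yh : p yh 0 * p yh 1 = 0 :=
    mul_eq_zero_of_eq_mul_add_of_det_ne_zero (hfraction 0 yh) (hfraction 1 yh) hdet
  have hsum y : p 0 y + p 1 y = 1 := condProb_eq_zero_add_condProb_eq_one hYh
    ((hposY 0 y).trans_le (measure_mono fun _ h => h.1)).ne'
  rcases mul_eq_zero.1 (hprod 1) with h10 | h11
  · have h01 : p 0 1 = 0 := by simpa [show p 0 0 = 1 by linarith [hsum 0]] using hprod 0
    exact .inl (measure_setOf_eq_eq_one_of_fin_two (measure_inter_eq_zero_of_condProb_eq_zero h10)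
      (measure_inter_eq_zero_of_condProb_eq_zero h01))
  · have h00 : p 0 0 = 0 := by simpa [show p 0 1 = 1 by linarith [hsum 1]] using hprod 0
    exact .inr (measure_setOf_eq_one_sub_eq_one_of_fin_two
      (measure_inter_eq_zero_of_condProb_eq_zero h00)
      (measure_inter_eq_zero_of_condProb_eq_zero h11))

/-- If `(Ŷ, Y, A)` satisfies both exact separation and exact sufficiency, and the group
conditional base odds differ (`ρ₀ ≠ ρ₁`), then the classifier is perfect or perfectly
flipped. -/
theorem stmt_5 {Ω : Type*} [MeasurableSpace Ω] (μ : Measure Ω) [IsProbabilityMeasure μ]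
    (Yh Y A : Ω → Fin 2) (hYh : Measurable Yh) (hY : Measurable Y) (hA : Measurable A)
    (hposY : ∀ a y : Fin 2, 0 < μ {ω | Y ω = y ∧ A ω = a})
    (hposYh : ∀ a yh : Fin 2, 0 < μ {ω | Yh ω = yh ∧ A ω = a})
    (hsep : ∀ a y yh : Fin 2,
      condProb μ {ω | Yh ω = yh} {ω | Y ω = y ∧ A ω = a}
        = condProb μ {ω | Yh ω = yh} {ω | Y ω = y})
    (hsuff : ∀ a y yh : Fin 2,
      condProb μ {ω | Y ω = y} {ω | Yh ω = yh ∧ A ω = a}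
        = condProb μ {ω | Y ω = y} {ω | Yh ω = yh})
    (hrho : condProb μ {ω | Y ω = 1} {ω | A ω = 0} / condProb μ {ω | Y ω = 0} {ω | A ω = 0}
      ≠ condProb μ {ω | Y ω = 1} {ω | A ω = 1} / condProb μ {ω | Y ω = 0} {ω | A ω = 1}) :
    μ {ω | Yh ω = Y ω} = 1 ∨ μ {ω | Yh ω = 1 - Y ω} = 1 :=
  stmt_5_general μ Yh Y A hYh hY hposY hsep hsuff hrho
end

section
/- Let (Ŷ, Y) be {0,1}-valued random variables such that Pr[Y = 1] > 0, Pr[Y = 0] > 0, Pr[Ŷ = 1] > 0, and Pr[Ŷ = 0] > 0, and define γ = TPR·PPV + FNR·FOR. Then γ = 1 if and only if either Pr[Ŷ = Y] = 1 (the classifier is perfect) or Pr[Ŷ = 1 − Y] = 1 (the classifier is perfectly flipped). -/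
open MeasureTheory

/-!
Let `a, b, c, d` be the probabilities of `(Ŷ, Y) = (1,1), (1,0), (0,1), (0,0)`. Over a common
denominator, `1 - γ = (a b (c + d) + c d (a + b)) / ((a + c)(a + b)(c + d))`, and both terms of the
numerator are nonnegative, so `γ = 1` iff `a b = 0` and `c d = 0`. Since `Y` takes both values with
positive probability, this leaves `b = c = 0` (perfect) or `a = d = 0` (perfectly flipped).
-/

/-- `TPR = a/(a+c)`, `PPV = a/(a+b)`, `FNR = c/(a+c)`, `FOR = c/(c+d)` for the cell probabilities
`a, b, c, d` of `(Ŷ, Y) = (1,1), (1,0), (0,1), (0,0)`. -/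
noncomputable def kmrGamma (a b c d : ℝ) : ℝ :=
  a / (a + c) * (a / (a + b)) + c / (a + c) * (c / (c + d))

theorem one_sub_kmrGamma {a b c d : ℝ} (hac : a + c ≠ 0) (hab : a + b ≠ 0) (hcd : c + d ≠ 0) :
    1 - kmrGamma a b c d = (a * b * (c + d) + c * d * (a + b)) / ((a + c) * (a + b) * (c + d)) := by
  unfold kmrGamma
  field_simp
  ring

theorem kmrGamma_eq_one_iff {a b c d : ℝ} (ha : 0 ≤ a) (hb : 0 ≤ b) (hc : 0 ≤ c) (hd : 0 ≤ d)
    (hac : 0 < a + c) (hbd : 0 < b + d) (hab : 0 < a + b) (hcd : 0 < c + d) :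
    kmrGamma a b c d = 1 ↔ (b = 0 ∧ c = 0) ∨ (a = 0 ∧ d = 0) := by
  have hden : (a + c) * (a + b) * (c + d) ≠ 0 := by positivity
  have hnum : a * b * (c + d) + c * d * (a + b) = 0 ↔ a * b = 0 ∧ c * d = 0 := by
    rw [add_eq_zero_iff_of_nonneg (by positivity) (by positivity),
      mul_eq_zero_iff_right hcd.ne', mul_eq_zero_iff_right hab.ne']
  rw [eq_comm, ← sub_eq_zero, one_sub_kmrGamma hac.ne' hab.ne' hcd.ne',
    div_eq_zero_iff, or_iff_left hden, hnum, mul_eq_zero, mul_eq_zero]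
  have hac' : ¬(a = 0 ∧ c = 0) := by rintro ⟨rfl, rfl⟩; simp at hac
  have hbd' : ¬(b = 0 ∧ d = 0) := by rintro ⟨rfl, rfl⟩; simp at hbd
  tauto

section

variable {Ω : Type*} [MeasurableSpace Ω] {μ : Measure Ω}

theorem measureReal_eq_inter_add_inter_of_fin_two [IsFiniteMeasure μ] {f : Ω → Fin 2}
    (hf : Measurable f) (s : Set Ω) :
    μ.real s = μ.real ({ω | f ω = 1} ∩ s) + μ.real ({ω | f ω = 0} ∩ s) := by
  have hcompl : s \ {ω | f ω = 1} = {ω | f ω = 0} ∩ s := by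
    ext ω
    simp only [Set.mem_sdiff, Set.mem_inter_iff, Set.mem_ofPred_eq]
    grind
  have hf1 : MeasurableSet {ω | f ω = 1} := hf (measurableSet_singleton 1)
  rw [← measureReal_inter_add_sdiff hf1, hcompl, Set.inter_comm]

theorem prob_eq_one_iff_of_compl_eq_union [IsProbabilityMeasure μ] {s t u : Set Ω}
    (ht : MeasurableSet t) (hu : MeasurableSet u) (hs : s = (t ∪ u)ᶜ) :
    μ s = 1 ↔ μ.real t = 0 ∧ μ.real u = 0 := by
  rw [hs, prob_compl_eq_one_iff (ht.union hu), measure_union_null_iff,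
    measureReal_eq_zero_iff, measureReal_eq_zero_iff]

end

/-- Kleinberg–Mullainathan–Raghavan's quantity `γ = TPR·PPV + FNR·FOR` equals `1`
if and only if the classifier is perfect (`Ŷ = Y` a.s.) or perfectly flipped
(`Ŷ = 1 - Y` a.s.). -/
theorem stmt_12 {Ω : Type*} [MeasurableSpace Ω] (μ : Measure Ω) [IsProbabilityMeasure μ]
    (Yh Y : Ω → Fin 2) (hYh : Measurable Yh) (hY : Measurable Y)
    (hY1 : 0 < μ {ω | Y ω = 1}) (hY0 : 0 < μ {ω | Y ω = 0})
    (hYh1 : 0 < μ {ω | Yh ω = 1}) (hYh0 : 0 < μ {ω | Yh ω = 0}) :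
    condProb μ {ω | Yh ω = 1} {ω | Y ω = 1} * condProb μ {ω | Y ω = 1} {ω | Yh ω = 1}
      + condProb μ {ω | Yh ω = 0} {ω | Y ω = 1} * condProb μ {ω | Y ω = 1} {ω | Yh ω = 0} = 1
    ↔ (μ {ω | Yh ω = Y ω} = 1 ∨ μ {ω | Yh ω = 1 - Y ω} = 1) := by
  have hcell (i j : Fin 2) : MeasurableSet ({ω | Yh ω = i} ∩ {ω | Y ω = j}) :=
    (hYh (measurableSet_singleton i)).inter (hY (measurableSet_singleton j))
  have hmarg_Y (j : Fin 2) := measureReal_eq_inter_add_inter_of_fin_two (μ := μ) hYh {ω | Y ω = j}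
  have hmarg_Yh (i : Fin 2) := measureReal_eq_inter_add_inter_of_fin_two (μ := μ) hY {ω | Yh ω = i}
  simp only [Set.inter_comm {ω | Y ω = _} {ω | Yh ω = _}] at hmarg_Yh
  have hpos {s : Set Ω} (h : 0 < μ s) : 0 < μ.real s := ENNReal.toReal_pos h.ne' (measure_ne_top μ s)
  have hperfect := prob_eq_one_iff_of_compl_eq_union (μ := μ) (hcell 1 0) (hcell 0 1)
    (s := {ω | Yh ω = Y ω}) (by ext ω; simp only [Set.mem_compl_iff, Set.mem_union,
      Set.mem_inter_iff, Set.mem_ofPred_eq]; omega)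
  have hflipped := prob_eq_one_iff_of_compl_eq_union (μ := μ) (hcell 1 1) (hcell 0 0)
    (s := {ω | Yh ω = 1 - Y ω}) (by ext ω; simp only [Set.mem_compl_iff, Set.mem_union,
      Set.mem_inter_iff, Set.mem_ofPred_eq]; omega)
  rw [hperfect, hflipped, ← kmrGamma_eq_one_iff measureReal_nonneg measureReal_nonneg
    measureReal_nonneg measureReal_nonneg (hmarg_Y 1 ▸ hpos hY1) (hmarg_Y 0 ▸ hpos hY0)
    (hmarg_Yh 1 ▸ hpos hYh1) (hmarg_Yh 0 ▸ hpos hYh0)]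
  simp only [condProb, kmrGamma, ← measureReal_def, ← hmarg_Y, ← hmarg_Yh,
    Set.inter_comm {ω | Y ω = 1} {ω | Yh ω = _}]
end

section
/- For every positive integer N, there exists a pair of {0,1}-valued random variables (Ŷ, Y) on a finite probability space whose joint distribution assigns probability 1/(N+3) to each of the outcomes (Ŷ, Y) = (0,0) [true negative], (Ŷ, Y) = (1,0) [false positive], and (Ŷ, Y) = (1,1) [true positive], and probability N/(N+3) to (Ŷ, Y) = (0,1) [false negative], such that PPV = 1/2 and γ = TPR·PPV + FNR·FOR ≥ (N/(N+1))². -/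
/-!
Put the probabilities proportional to the counts `tn, fp, fn, tp = 1, 1, N, 1` on `{0,1}²`.
Every conditional probability is then a ratio of counts: `PPV = tp / (fp + tp) = 1/2`,
`TPR = 1/(N+1)` and `FNR = FOR = N/(N+1)`, so already the term `FNR·FOR` of `γ` is
`(N/(N+1))²`.
-/

open MeasureTheory ENNReal Finset

section WeightedCount

variable {α : Type*} [Fintype α] [MeasurableSpace α] [MeasurableSingletonClass α]

noncomputable def weightedCount (w : α → ℕ) : Measure α :=
  (∑ a, (w a : ℝ≥0∞))⁻¹ • ∑ a, (w a : ℝ≥0∞) • Measure.dirac a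

theorem weightedCount_apply (w : α → ℕ) (s : Set α) [DecidablePred (· ∈ s)] :
    weightedCount w s = ((∑ a with a ∈ s, w a : ℕ) : ℝ≥0∞) / (∑ a, w a : ℕ) := by
  simp [weightedCount, Measure.finsetSum_apply, Measure.dirac_apply, Set.indicator_apply,
    sum_filter, ENNReal.div_eq_inv_mul]

theorem isProbabilityMeasure_weightedCount (w : α → ℕ) (hw : ∑ a, w a ≠ 0) :
    IsProbabilityMeasure (weightedCount w) := by
  constructor
  rw [weightedCount_apply, filter_true_of_mem fun _ _ ↦ Set.mem_univ _]
  exact ENNReal.div_self (by exact_mod_cast hw) (natCast_ne_top _)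

theorem condProb_weightedCount (w : α → ℕ) (hw : ∑ a, w a ≠ 0) (s t : Set α)
    [DecidablePred (· ∈ s)] [DecidablePred (· ∈ t)] :
    condProb (weightedCount w) s t =
      ((∑ a with a ∈ s ∩ t, w a : ℕ) : ℝ) / (∑ a with a ∈ t, w a : ℕ) := by
  rw [condProb, weightedCount_apply, weightedCount_apply, toReal_div, toReal_div]
  simp only [toReal_natCast]
  exact div_div_div_cancel_right₀ (by exact_mod_cast hw) _ _

end WeightedCount

section ConfusionMatrix

variable (tn fp fn tp : ℕ)

/-- Outcomes are pairs `(Ŷ, Y)`: rows of the count matrix are indexed by `Ŷ`, columns by `Y`. -/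
noncomputable def confusionMeasure : Measure (Fin 2 × Fin 2) :=
  weightedCount fun ω ↦ !![tn, fn; fp, tp] ω.1 ω.2

variable {tn fp fn tp}

theorem sum_confusion_entries :
    ∑ ω : Fin 2 × Fin 2, !![tn, fn; fp, tp] ω.1 ω.2 = tn + fp + fn + tp := by
  simp [Fintype.sum_prod_type, Fin.sum_univ_two]; ring

theorem confusionMeasure_apply (s : Set (Fin 2 × Fin 2)) [DecidablePred (· ∈ s)] :
    confusionMeasure tn fp fn tp s =
      ((∑ ω with ω ∈ s, !![tn, fn; fp, tp] ω.1 ω.2 : ℕ) : ℝ≥0∞) / (tn + fp + fn + tp : ℕ) := by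
  rw [confusionMeasure, weightedCount_apply, sum_confusion_entries]

theorem confusionMeasure_atom (i j : Fin 2) :
    confusionMeasure tn fp fn tp {ω | ω.1 = i ∧ ω.2 = j} =
      (!![tn, fn; fp, tp] i j : ℕ) / (tn + fp + fn + tp : ℕ) := by
  rw [confusionMeasure_apply, sum_eq_single_of_mem (i, j) (by simp) fun ω hω hne ↦
    (hne (Prod.ext_iff.2 (by simpa using hω))).elim]

variable (h : tn + fp + fn + tp ≠ 0)
include h

theorem isProbabilityMeasure_confusionMeasure :
    IsProbabilityMeasure (confusionMeasure tn fp fn tp) :=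
  isProbabilityMeasure_weightedCount _ (sum_confusion_entries ▸ h)

theorem ppv_confusionMeasure :
    condProb (confusionMeasure tn fp fn tp) {ω | ω.2 = 1} {ω | ω.1 = 1} = tp / (fp + tp) := by
  rw [confusionMeasure, condProb_weightedCount _ (sum_confusion_entries ▸ h)]
  simp [sum_filter, Fintype.sum_prod_type, Fin.sum_univ_two]

theorem tpr_confusionMeasure :
    condProb (confusionMeasure tn fp fn tp) {ω | ω.1 = 1} {ω | ω.2 = 1} = tp / (fn + tp) := by
  rw [confusionMeasure, condProb_weightedCount _ (sum_confusion_entries ▸ h)]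
  simp [sum_filter, Fintype.sum_prod_type, Fin.sum_univ_two]

theorem fnr_confusionMeasure :
    condProb (confusionMeasure tn fp fn tp) {ω | ω.1 = 0} {ω | ω.2 = 1} = fn / (fn + tp) := by
  rw [confusionMeasure, condProb_weightedCount _ (sum_confusion_entries ▸ h)]
  simp [sum_filter, Fintype.sum_prod_type, Fin.sum_univ_two]

theorem for_confusionMeasure :
    condProb (confusionMeasure tn fp fn tp) {ω | ω.2 = 1} {ω | ω.1 = 0} = fn / (tn + fn) := by
  rw [confusionMeasure, condProb_weightedCount _ (sum_confusion_entries ▸ h)]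
  simp [sum_filter, Fintype.sum_prod_type, Fin.sum_univ_two]

end ConfusionMatrix

theorem stmt_13_general (N : ℕ) :
    ∃ (Ω : Type) (_ : Fintype Ω) (_ : MeasurableSpace Ω) (μ : Measure Ω)
      (_ : IsProbabilityMeasure μ) (Yh Y : Ω → Fin 2),
      Measurable Yh ∧ Measurable Y ∧
      -- true negative
      μ {ω | Yh ω = 0 ∧ Y ω = 0} = 1 / ((N : ℝ≥0∞) + 3) ∧
      -- false positive
      μ {ω | Yh ω = 1 ∧ Y ω = 0} = 1 / ((N : ℝ≥0∞) + 3) ∧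
      -- true positive
      μ {ω | Yh ω = 1 ∧ Y ω = 1} = 1 / ((N : ℝ≥0∞) + 3) ∧
      -- false negatives
      μ {ω | Yh ω = 0 ∧ Y ω = 1} = (N : ℝ≥0∞) / ((N : ℝ≥0∞) + 3) ∧
      -- PPV = 1/2
      condProb μ {ω | Y ω = 1} {ω | Yh ω = 1} = 1 / 2 ∧
      -- γ = TPR·PPV + FNR·FOR ≥ (N/(N+1))²
      condProb μ {ω | Yh ω = 1} {ω | Y ω = 1} * condProb μ {ω | Y ω = 1} {ω | Yh ω = 1}
        + condProb μ {ω | Yh ω = 0} {ω | Y ω = 1} * condProb μ {ω | Y ω = 1} {ω | Yh ω = 0}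
        ≥ ((N : ℝ) / ((N : ℝ) + 1)) ^ 2 := by
  have h : 1 + 1 + N + 1 ≠ 0 := by omega
  have htotal : ((1 + 1 + N + 1 : ℕ) : ℝ≥0∞) = N + 3 := by push_cast; ring
  refine ⟨Fin 2 × Fin 2, inferInstance, inferInstance, confusionMeasure 1 1 N 1,
    isProbabilityMeasure_confusionMeasure h, Prod.fst, Prod.snd, measurable_fst, measurable_snd,
    ?_, ?_, ?_, ?_, ?_, ?_⟩
  iterate 4 simp [confusionMeasure_atom, htotal]
  · rw [ppv_confusionMeasure h]; norm_num
  · rw [tpr_confusionMeasure h, ppv_confusionMeasure h, fnr_confusionMeasure h,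
      for_confusionMeasure h, Nat.cast_one, add_comm 1 (N : ℝ), ← sq]
    exact le_add_of_nonneg_left (by positivity)

/-- For every positive integer `N` there is a pair of `{0,1}`-valued random variables
`(Ŷ, Y)` on a finite probability space with one true negative, one false positive, one
true positive and `N` false negatives (i.e. probabilities `1/(N+3)`, `1/(N+3)`,
`1/(N+3)` and `N/(N+3)` respectively), such that `PPV = 1/2` while
`γ = TPR·PPV + FNR·FOR ≥ (N/(N+1))²`. -/
theorem stmt_13 (N : ℕ) (hN : 0 < N) :
    ∃ (Ω : Type) (_ : Fintype Ω) (_ : MeasurableSpace Ω) (μ : Measure Ω)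
      (_ : IsProbabilityMeasure μ) (Yh Y : Ω → Fin 2),
      Measurable Yh ∧ Measurable Y ∧
      -- true negative
      μ {ω | Yh ω = 0 ∧ Y ω = 0} = 1 / ((N : ℝ≥0∞) + 3) ∧
      -- false positive
      μ {ω | Yh ω = 1 ∧ Y ω = 0} = 1 / ((N : ℝ≥0∞) + 3) ∧
      -- true positive
      μ {ω | Yh ω = 1 ∧ Y ω = 1} = 1 / ((N : ℝ≥0∞) + 3) ∧
      -- false negatives
      μ {ω | Yh ω = 0 ∧ Y ω = 1} = (N : ℝ≥0∞) / ((N : ℝ≥0∞) + 3) ∧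
      -- PPV = 1/2
      condProb μ {ω | Y ω = 1} {ω | Yh ω = 1} = 1 / 2 ∧
      -- γ = TPR·PPV + FNR·FOR ≥ (N/(N+1))²
      condProb μ {ω | Yh ω = 1} {ω | Y ω = 1} * condProb μ {ω | Y ω = 1} {ω | Yh ω = 1}
        + condProb μ {ω | Yh ω = 0} {ω | Y ω = 1} * condProb μ {ω | Y ω = 1} {ω | Yh ω = 0}
        ≥ ((N : ℝ) / ((N : ℝ) + 1)) ^ 2 :=
  stmt_13_general N
end

section
/- For every ε > 0 there exists a pair of {0,1}-valued random variables (Ŷ, Y) on a finite probability space with Pr[Y = 1] > 0, Pr[Y = 0] > 0, Pr[Ŷ = 1] > 0, Pr[Ŷ = 0] > 0, such that PPV ≥ 1 − ε while γ = TPR·PPV + FNR·FOR ≤ 1/2 + ε. -/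
open MeasureTheory

/-- For every `ε > 0` there is a pair of `{0,1}`-valued random variables `(Ŷ, Y)` on a
finite probability space (with all four marginal events of positive probability) such
that `PPV ≥ 1 - ε` while `γ = TPR·PPV + FNR·FOR ≤ 1/2 + ε`. -/
theorem stmt_14 (ε : ℝ) (hε : 0 < ε) :
    ∃ (Ω : Type) (_ : Fintype Ω) (_ : MeasurableSpace Ω) (μ : Measure Ω)
      (_ : IsProbabilityMeasure μ) (Yh Y : Ω → Fin 2),
      Measurable Yh ∧ Measurable Y ∧
      0 < μ {ω | Y ω = 1} ∧ 0 < μ {ω | Y ω = 0} ∧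
      0 < μ {ω | Yh ω = 1} ∧ 0 < μ {ω | Yh ω = 0} ∧
      -- PPV ≥ 1 - ε
      condProb μ {ω | Y ω = 1} {ω | Yh ω = 1} ≥ 1 - ε ∧
      -- γ = TPR·PPV + FNR·FOR ≤ 1/2 + ε
      condProb μ {ω | Yh ω = 1} {ω | Y ω = 1} * condProb μ {ω | Y ω = 1} {ω | Yh ω = 1}
        + condProb μ {ω | Yh ω = 0} {ω | Y ω = 1} * condProb μ {ω | Y ω = 1} {ω | Yh ω = 0}
        ≤ 1 / 2 + ε := by
  set d : ℝ := min ε (1/4) with hd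
  have hd0 : 0 < d := lt_min hε (by norm_num)
  have hd4 : d ≤ 1/4 := min_le_right _ _
  have hdε : d ≤ ε := min_le_left _ _
  set a : ENNReal := ENNReal.ofReal d with ha
  set b : ENNReal := ENNReal.ofReal (1 - 2*d) with hb
  have hb0 : (0:ℝ) < 1 - 2*d := by linarith
  set μ : Measure (Fin 3) := a • Measure.dirac 0 + a • Measure.dirac 1 + b • Measure.dirac 2
    with hμ
  have hmeas : ∀ s : Set (Fin 3), MeasurableSet s := fun s => trivial
  have a0 : a ≠ 0 := (ENNReal.ofReal_pos.mpr hd0).ne'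
  have b0 : b ≠ 0 := (ENNReal.ofReal_pos.mpr hb0).ne'
  have hat : a.toReal = d := ENNReal.toReal_ofReal hd0.le
  have hbt : b.toReal = 1 - 2*d := ENNReal.toReal_ofReal hb0.le
  have e0 : μ {(0 : Fin 3)} = a := by
    simp [hμ, Measure.dirac_apply' _ (hmeas _), Set.indicator]
  have e1 : μ {(1 : Fin 3)} = a := by
    simp [hμ, Measure.dirac_apply' _ (hmeas _), Set.indicator]
  have e2 : μ {(2 : Fin 3)} = b := by
    simp [hμ, Measure.dirac_apply' _ (hmeas _), Set.indicator]
  have e01 : μ {(0 : Fin 3), 1} = a + a := by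
    simp [hμ, Measure.dirac_apply' _ (hmeas _), Set.indicator]
  have e12 : μ {(1 : Fin 3), 2} = a + b := by
    simp [hμ, Measure.dirac_apply' _ (hmeas _), Set.indicator]
  set Yh : Fin 3 → Fin 2 := fun ω => if ω = 0 then 1 else 0 with hYh
  set Y : Fin 3 → Fin 2 := fun ω => if ω = 2 then 0 else 1 with hY
  have sY1 : {ω : Fin 3 | Y ω = 1} = {0, 1} := by ext ω; fin_cases ω <;> simp [hY]
  have sY0 : {ω : Fin 3 | Y ω = 0} = {2} := by ext ω; fin_cases ω <;> simp [hY]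
  have sYh1 : {ω : Fin 3 | Yh ω = 1} = {0} := by ext ω; fin_cases ω <;> simp [hYh]
  have sYh0 : {ω : Fin 3 | Yh ω = 0} = {1, 2} := by ext ω; fin_cases ω <;> simp [hYh]
  refine ⟨Fin 3, inferInstance, inferInstance, μ, ?_, Yh, Y,
    measurable_of_countable _, measurable_of_countable _, ?_, ?_, ?_, ?_, ?_, ?_⟩
  · constructor
    have : (Set.univ : Set (Fin 3)) = {0, 1, 2} := by ext ω; fin_cases ω <;> simp
    rw [this]
    have h012 : μ {(0 : Fin 3), 1, 2} = a + a + b := by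
      simp [hμ, Measure.dirac_apply' _ (hmeas _), Set.indicator]
    rw [h012, ha, hb, ← ENNReal.ofReal_add hd0.le hd0.le,
      ← ENNReal.ofReal_add (by linarith) hb0.le,
      show d + d + (1 - 2*d) = (1:ℝ) by ring, ENNReal.ofReal_one]
  · rw [sY1, e01]; exact lt_of_lt_of_le a0.bot_lt le_self_add
  · rw [sY0, e2]; exact b0.bot_lt
  · rw [sYh1, e0]; exact a0.bot_lt
  · rw [sYh0, e12]; exact lt_of_lt_of_le a0.bot_lt le_self_add
  · unfold condProb
    rw [sY1, sYh1]
    have : ({0, 1} : Set (Fin 3)) ∩ {0} = {0} := by ext ω; fin_cases ω <;> simp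
    rw [this, e0, hat, div_self hd0.ne']
    linarith
  · unfold condProb
    rw [sY1, sYh1, sYh0]
    have i1 : ({0} : Set (Fin 3)) ∩ {0, 1} = {0} := by ext ω; fin_cases ω <;> simp
    have i2 : ({0, 1} : Set (Fin 3)) ∩ {0} = {0} := by ext ω; fin_cases ω <;> simp
    have i3 : ({1, 2} : Set (Fin 3)) ∩ {0, 1} = {1} := by ext ω; fin_cases ω <;> simp
    have i4 : ({0, 1} : Set (Fin 3)) ∩ {1, 2} = {1} := by ext ω; fin_cases ω <;> simp
    rw [i1, i2, i3, i4, e0, e1, e01, e12]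
    have ht2 : (a + a).toReal = 2 * d := by
      rw [ENNReal.toReal_add (by simp [ha]) (by simp [ha]), hat]; ring
    have htab : (a + b).toReal = 1 - d := by
      rw [ENNReal.toReal_add (by simp [ha]) (by simp [hb]), hat, hbt]; ring
    rw [ht2, htab, hat]
    have h1 : d / (2 * d) = 1 / 2 := by rw [div_eq_iff (by linarith)]; ring
    have h2 : d / d = 1 := div_self hd0.ne'
    rw [h1, h2]
    have h3 : d / (1 - d) ≤ 2 * d := by
      rw [div_le_iff₀ (by linarith)]; nlinarith
    nlinarith
end
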